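/- arXiv:1612.05957 — 5 statements merged into one kernel-verified Lean document; each statement's English description precedes it below -/
import Mathlib

section
/- Let ω : [0,1] → ℝ and g : [0,1]² → ℝ be continuous functions, and let n and k be integers with 2 ≤ k ≤ n. Then (1/(n−k)!) · (∫₀¹ e^{ω(s)} ds)^{n−k} · ∫_{0<s₁<⋯<s_k<1} e^{ω(s₁)+⋯+ω(s_k)} g(s₁, s_k) ds₁⋯ds_k equals ∫_{0<s₁<⋯<s_n<1} e^{ω(s₁)+⋯+ω(s_n)} · [ Σ_{1≤i<j≤n, j−i≥k−1} C(j−i−1, k−2) · g(s_i, s_j) ] ds₁⋯ds_n, where C(·,·) denotes the binomial coefficient. -/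
open MeasureTheory Real

/-- The open ordered simplex `{0 < s 0 < s 1 < ⋯ < s (k-1) < 1}` in `Fin k → ℝ`. -/
def orderedSimplex (k : ℕ) : Set (Fin k → ℝ) :=
  {s | StrictMono s ∧ ∀ i, s i ∈ Set.Ioo (0 : ℝ) 1}

/-!
Write `n = k + m`. By Fubini, `m!` times the left-hand side is the integral over the cube
`(0,1)ⁿ` of `1[x₀ < ⋯ < x_{k-1}] · e^{ω(x₀) + ⋯ + ω(x_{n-1})} · g(x₀, x_{k-1})`. Up to a null set
the cube is the disjoint union of the images `{s ∘ σ⁻¹}` of the ordered simplex under coordinate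
permutations `σ`, and on the image of `σ` the integrand is `e^{Σ ω(sᵢ)} g(s_{σ 0}, s_{σ (k-1)})`
when `σ` is increasing on `{0, …, k-1}`, and `0` otherwise. The permutations increasing on
`{0, …, k-1}` with `σ 0 = i`, `σ (k-1) = j` are counted by choosing the `k - 2` intermediate values
in `(i, j)` and then an arbitrary bijection of the remaining `m` positions: `C(j-i-1, k-2) · m!`.
-/

open Finset
open scoped Nat

namespace Equiv.Perm

variable {ι α : Type*} [Fintype ι] [Fintype α] [DecidableEq α]

theorem card_comp_eq_of_injective {e ψ : ι → α} (he : Function.Injective e)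
    (hψ : Function.Injective ψ) :
    #{σ : Perm α | ⇑σ ∘ e = ψ} = (Fintype.card α - Fintype.card ι)! := by
  obtain ⟨σ₀, hσ₀⟩ := exists_extending_pair e ψ he hψ
  have fiber_equiv : {σ : Perm α // ⇑σ ∘ e = ψ} ≃
      {τ : Perm α // ∀ a, ¬ a ∉ Set.range e → τ a = a} :=
    subtypeEquiv (Equiv.mulLeft σ₀⁻¹) fun σ => by
      simp only [not_not, Set.forall_mem_range, Equiv.coe_mulLeft, Perm.mul_apply, inv_eq_iff_eq,
        funext_iff, Function.comp_apply, hσ₀]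
  rw [← Fintype.card_subtype, Fintype.card_congr
    (fiber_equiv.trans (Perm.subtypeEquivSubtypePerm (· ∉ Set.range e)).symm), Fintype.card_perm,
    Fintype.card_subtype_compl, Set.card_range_of_injective he]

theorem sum_comp_eq_factorial_smul [DecidableEq ι] {M : Type*} [AddCommMonoid M] {e : ι → α}
    (he : Function.Injective e) (F : (ι → α) → M)
    (hF : ∀ ψ, ¬ Function.Injective ψ → F ψ = 0) :
    ∑ σ : Perm α, F (⇑σ ∘ e) = (Fintype.card α - Fintype.card ι)! • ∑ ψ, F ψ := by
  rw [← Finset.sum_fiberwise univ (fun σ : Perm α => ⇑σ ∘ e), Finset.smul_sum]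
  refine Fintype.sum_congr _ _ fun ψ => ?_
  rw [Finset.sum_congr rfl fun σ hσ => by rw [(Finset.mem_filter.1 hσ).2], Finset.sum_const]
  by_cases hψ : Function.Injective ψ
  · rw [card_comp_eq_of_injective he hψ]
  · rw [hF ψ hψ, smul_zero, smul_zero]

end Equiv.Perm

section StrictMonoTuples

variable {α : Type*} [LinearOrder α]

theorem Fin.strictMono_snoc {n : ℕ} {f : Fin n → α} {b : α} :
    StrictMono (Fin.snoc f b : Fin (n + 1) → α) ↔ StrictMono f ∧ ∀ i, f i < b := by
  rw [← Fin.insertNth_last', Fin.strictMono_insertNth_iff]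
  simp [Fin.castSucc_lt_last, not_le_of_gt (Fin.castSucc_lt_last _)]

theorem Tuple.strictMono_comp_iff_eq_sort {n : ℕ} {x : Fin n → α} (hx : Function.Injective x)
    (σ : Equiv.Perm (Fin n)) :
    StrictMono (x ∘ σ) ↔ σ = Tuple.sort x := by
  refine ⟨fun h => Tuple.eq_sort_iff.2 ⟨h.monotone, fun i j hij hxij => ?_⟩, ?_⟩
  · exact absurd hxij (h hij).ne
  · rintro rfl
    exact (Tuple.monotone_sort x).strictMono_of_injective (hx.comp (Equiv.injective _))

variable [LocallyFiniteOrder α]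

def strictMonoEndpointsEquiv (p : ℕ) {a b : α} (hab : a < b) :
    {ψ : Fin (p + 2) → α // StrictMono ψ ∧ ψ 0 = a ∧ ψ (Fin.last _) = b} ≃
      (Fin p ↪o Ioo a b) where
  toFun ψ := OrderEmbedding.ofStrictMono
    (fun l => ⟨ψ.1 l.castSucc.succ, mem_Ioo.2 ⟨ψ.2.2.1.symm.trans_lt (ψ.2.1 (Fin.succ_pos _)),
      (ψ.2.1 (Fin.lt_def.2 (by simp))).trans_eq ψ.2.2.2⟩⟩)
    fun l l' h => ψ.2.1 (by simpa using h)
  invFun χ := ⟨Fin.cons a (Fin.snoc (fun l => (χ l : α)) b), by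
    refine ⟨Fin.strictMono_cons.2 ⟨fun j => ?_, Fin.strictMono_snoc.2 ⟨?_, fun l => ?_⟩⟩, rfl,
      by simp [← Fin.succ_last]⟩
    · refine Fin.lastCases ?_ (fun l => ?_) j
      · simpa using hab
      · simpa using (mem_Ioo.1 (χ l).2).1
    · exact fun l l' h => Subtype.coe_lt_coe.2 (χ.strictMono h)
    · exact (mem_Ioo.1 (χ l).2).2⟩
  left_inv ψ := by
    ext j
    refine Fin.cases ?_ (fun j => Fin.lastCases ?_ (fun l => ?_) j) j
    · simp [ψ.2.2.1]
    · simp [Fin.succ_last, ψ.2.2.2]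
    · simp only [Fin.cons_succ, Fin.snoc_castSucc]; rfl
  right_inv χ := by
    ext l
    simp

variable [Fintype α]

theorem card_strictMono_endpoints (p : ℕ) {a b : α} (hab : a < b) :
    #{ψ : Fin (p + 2) → α | StrictMono ψ ∧ ψ 0 = a ∧ ψ (Fin.last _) = b} =
      (#(Ioo a b)).choose p := by
  rw [← Fintype.card_subtype, ← Nat.card_eq_fintype_card, Nat.card_congr
    ((strictMonoEndpointsEquiv p hab).trans Set.powersetCard.ofFinEmbEquiv),
    Set.powersetCard.card, Nat.card_eq_fintype_card, Fintype.card_coe]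

theorem sum_strictMono_endpoints {M : Type*} [AddCommMonoid M] (p : ℕ) (h : α → α → M) :
    ∑ ψ : Fin (p + 2) → α, (if StrictMono ψ then h (ψ 0) (ψ (Fin.last _)) else 0) =
      ∑ a, ∑ b, if a < b then (#(Ioo a b)).choose p • h a b else 0 := by
  have expand (ψ : Fin (p + 2) → α) : (if StrictMono ψ then h (ψ 0) (ψ (Fin.last _)) else 0) =
      ∑ a, ∑ b, if StrictMono ψ ∧ ψ 0 = a ∧ ψ (Fin.last _) = b then h a b else 0 := by
    by_cases hψ : StrictMono ψ <;> simp [hψ, ite_and]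
  rw [Fintype.sum_congr _ _ expand, Finset.sum_comm]
  refine Fintype.sum_congr _ _ fun a => ?_
  rw [Finset.sum_comm]
  refine Fintype.sum_congr _ _ fun b => ?_
  rw [← Finset.sum_filter, Finset.sum_const]
  split_ifs with hab
  · rw [card_strictMono_endpoints p hab]
  · rw [Finset.card_eq_zero.2, zero_smul]
    refine Finset.filter_false_of_mem fun ψ _ ⟨hψ, h0, hlast⟩ => hab ?_
    exact h0 ▸ hlast ▸ hψ (Fin.lt_def.2 (by simp))

end StrictMonoTuples

theorem sum_perm_strictMono_comp_castAdd {M : Type*} [AddCommMonoid M] (p m : ℕ)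
    (h : Fin (p + 2 + m) → Fin (p + 2 + m) → M) :
    ∑ σ : Equiv.Perm (Fin (p + 2 + m)), (if StrictMono (⇑σ ∘ Fin.castAdd m) then
        h (σ (Fin.castAdd m 0)) (σ (Fin.castAdd m (Fin.last _))) else 0) =
      m ! • ∑ a, ∑ b, if a < b then (#(Ioo a b)).choose p • h a b else 0 := by
  have := Equiv.Perm.sum_comp_eq_factorial_smul (Fin.castAdd_injective _ m)
    (fun ψ => if StrictMono ψ then h (ψ 0) (ψ (Fin.last _)) else 0)
    fun ψ hψ => if_neg fun hmono => hψ hmono.injective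
  simpa [sum_strictMono_endpoints] using this

theorem Fin.ite_choose_sub_eq_ite_choose_card_Ioo {R : Type*} [NonAssocSemiring R] {N : ℕ}
    (k : ℕ) (i j : Fin N) (c : R) :
    (if (i : ℕ) < j ∧ k - 1 ≤ (j : ℕ) - i then (((j : ℕ) - i - 1).choose (k - 2) : R) * c
      else 0) = if i < j then ((#(Ioo i j)).choose (k - 2) : R) * c else 0 := by
  simp only [Fin.card_Ioo, Fin.lt_def]
  by_cases hij : (i : ℕ) < j
  · by_cases hk : k - 1 ≤ (j : ℕ) - i
    · simp [hij, hk]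
    · simp [hij, hk, Nat.choose_eq_zero_of_lt (by omega : (j : ℕ) - i - 1 < k - 2)]
  · simp [hij]

theorem measurableSet_setOf_strictMono {ι : Type*} [Countable ι] [Preorder ι] :
    MeasurableSet {x : ι → ℝ | StrictMono x} := by
  simp only [StrictMono, Set.ofPred_forall]
  exact .iInter fun i => .iInter fun j => .iInter fun _ =>
    measurableSet_lt (measurable_pi_apply i) (measurable_pi_apply j)

theorem ae_injective_volume_pi {ι : Type*} [Fintype ι] : ∀ᵐ x : ι → ℝ, Function.Injective x := by
  have ae_ne (i j : ι) (hij : i ≠ j) : ∀ᵐ x : ι → ℝ, x i ≠ x j := by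
    classical
    let L : (ι → ℝ) →ₗ[ℝ] ℝ := (LinearMap.proj i : (ι → ℝ) →ₗ[ℝ] ℝ) - LinearMap.proj j
    have hL : LinearMap.ker L ≠ ⊤ := fun h => by
      have : Pi.single i (1 : ℝ) ∈ LinearMap.ker L := h ▸ Submodule.mem_top
      simp [L, Pi.single_eq_of_ne hij.symm] at this
    refine measure_mono_null (fun x hx => ?_) (Measure.addHaar_submodule volume _ hL)
    simpa [L, sub_eq_zero] using hx
  have ae_eq_imp (i j : ι) : ∀ᵐ x : ι → ℝ, x i = x j → i = j := by
    by_cases hij : i = j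
    · exact ae_of_all _ fun _ _ => hij
    · filter_upwards [ae_ne i j hij] with x hx h using absurd h hx
  exact ae_all_iff.2 fun i => ae_all_iff.2 fun j => ae_eq_imp i j

theorem ae_injective_pi_volume_restrict {ι : Type*} [Fintype ι] (s : Set ℝ) :
    ∀ᵐ x ∂(Measure.pi fun _ : ι => volume.restrict s), Function.Injective x := by
  rw [← Measure.restrict_pi_pi, ← volume_pi]
  exact ae_restrict_of_ae ae_injective_volume_pi

theorem restrict_pi_restrict_setOf_strictMono (N : ℕ) (s : Set ℝ) :
    (Measure.pi fun _ : Fin N => volume.restrict s).restrict {x | StrictMono x} =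
      volume.restrict {x | StrictMono x ∧ ∀ i, x i ∈ s} := by
  rw [← Measure.restrict_pi_pi, ← volume_pi,
    Measure.restrict_restrict measurableSet_setOf_strictMono]
  congr 1
  ext x
  simp

section PermutationDecomposition

variable {n : ℕ} {ν : Measure ℝ} [SigmaFinite ν]

theorem coe_piCongrLeft_perm_symm (σ : Equiv.Perm (Fin n)) :
    ⇑(MeasurableEquiv.piCongrLeft (fun _ => ℝ) σ.symm) = fun x => x ∘ σ := by
  ext x i
  simp [MeasurableEquiv.coe_piCongrLeft, Equiv.piCongrLeft_apply_eq_cast]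

theorem integral_eq_setIntegral_strictMono_sum_perm {E : Type*} [NormedAddCommGroup E]
    [NormedSpace ℝ E] (hinj : ∀ᵐ x ∂(Measure.pi fun _ : Fin n => ν), Function.Injective x)
    {f : (Fin n → ℝ) → E} (hf : Integrable f (Measure.pi fun _ => ν)) :
    ∫ x, f x ∂(Measure.pi fun _ => ν) =
      ∫ x in {x | StrictMono x}, ∑ σ : Equiv.Perm (Fin n), f (x ∘ σ) ∂(Measure.pi fun _ => ν) := by
  set μ := Measure.pi fun _ : Fin n => ν
  let cone (σ : Equiv.Perm (Fin n)) : Set (Fin n → ℝ) := {x | StrictMono (x ∘ ⇑σ⁻¹)}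
  have cone_meas (σ) : MeasurableSet (cone σ) :=
    measurableSet_setOf_strictMono.preimage (by fun_prop)
  have sum_cone : f =ᵐ[μ] fun x => ∑ σ, (cone σ).indicator f x := by
    filter_upwards [hinj] with x hx
    simp only [cone, Set.indicator_apply, Set.mem_ofPred_eq,
      Tuple.strictMono_comp_iff_eq_sort hx, inv_eq_iff_eq_inv, Finset.sum_ite_eq', mem_univ,
      if_true]
  have hmp (σ : Equiv.Perm (Fin n)) := measurePreserving_piCongrLeft (fun _ => ν) σ.symm
  have cone_integral (σ) : ∫ x in cone σ, f x ∂μ = ∫ x in {x | StrictMono x}, f (x ∘ σ) ∂μ := by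
    rw [← integral_indicator (cone_meas σ), ← integral_indicator measurableSet_setOf_strictMono,
      ← (hmp σ).integral_comp']
    congr with x
    simp [cone, Set.indicator_apply, coe_piCongrLeft_perm_symm, Function.comp_assoc]
  have comp_integrable (σ : Equiv.Perm (Fin n)) : Integrable (fun x => f (x ∘ σ)) μ := by
    have := ((hmp σ).integrable_comp_emb (MeasurableEquiv.measurableEmbedding _)).2 hf
    rwa [coe_piCongrLeft_perm_symm] at this
  rw [integral_congr_ae sum_cone, integral_finsetSum _ fun σ _ => hf.indicator (cone_meas σ),
    integral_finsetSum _ fun σ _ => (comp_integrable σ).integrableOn]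
  simp_rw [integral_indicator (cone_meas _), cone_integral]

end PermutationDecomposition

section FinAppend

variable {α : Type*} [MeasurableSpace α] (k m : ℕ)

def finAppendMeasurableEquiv : (Fin (k + m) → α) ≃ᵐ (Fin k → α) × (Fin m → α) :=
  (MeasurableEquiv.piCongrLeft (fun _ => α) finSumFinEquiv).symm.trans
    (MeasurableEquiv.sumPiEquivProdPi fun _ => α)

theorem coe_finAppendMeasurableEquiv :
    ⇑(finAppendMeasurableEquiv (α := α) k m) =
      fun x => (x ∘ Fin.castAdd m, x ∘ Fin.natAdd k) := by
  ext x i <;> simp [finAppendMeasurableEquiv, MeasurableEquiv.coe_sumPiEquivProdPi,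
    MeasurableEquiv.piCongrLeft, Equiv.piCongrLeft, Equiv.sumPiEquivProdPi]

theorem measurePreserving_finAppendMeasurableEquiv (μ : Measure α) [SigmaFinite μ] :
    MeasurePreserving (finAppendMeasurableEquiv k m)
      (Measure.pi fun _ => μ) ((Measure.pi fun _ => μ).prod (Measure.pi fun _ => μ)) :=
  (measurePreserving_sumPiEquivProdPi fun _ => μ).comp
    (measurePreserving_piCongrLeft (fun _ => μ) finSumFinEquiv).symm

variable {k m} {μ : Measure α} [SigmaFinite μ]

theorem MeasureTheory.Integrable.comp_castAdd_mul_comp_natAdd {F : (Fin k → α) → ℝ}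
    {G : (Fin m → α) → ℝ} (hF : Integrable F (Measure.pi fun _ => μ))
    (hG : Integrable G (Measure.pi fun _ => μ)) :
    Integrable (fun x => F (x ∘ Fin.castAdd m) * G (x ∘ Fin.natAdd k)) (Measure.pi fun _ => μ) := by
  have := ((measurePreserving_finAppendMeasurableEquiv k m μ).integrable_comp_emb
    (MeasurableEquiv.measurableEmbedding _)).2 (hF.mul_prod hG)
  rwa [coe_finAppendMeasurableEquiv] at this

theorem integral_comp_castAdd_mul_comp_natAdd (F : (Fin k → α) → ℝ) (G : (Fin m → α) → ℝ) :
    ∫ x, F (x ∘ Fin.castAdd m) * G (x ∘ Fin.natAdd k) ∂(Measure.pi fun _ => μ) =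
      (∫ y, F y ∂(Measure.pi fun _ => μ)) * ∫ z, G z ∂(Measure.pi fun _ => μ) := by
  rw [← integral_prod_mul, ← (measurePreserving_finAppendMeasurableEquiv k m μ).integral_comp',
    coe_finAppendMeasurableEquiv]

end FinAppend

theorem integrableOn_orderedSimplex_of_continuousOn {N : ℕ} {f : (Fin N → ℝ) → ℝ}
    (hf : ContinuousOn f (Set.univ.pi fun _ => Set.Icc 0 1)) :
    IntegrableOn f (orderedSimplex N) :=
  (hf.integrableOn_compact (isCompact_univ_pi fun _ => isCompact_Icc)).mono_set
    fun _ hx i _ => Set.Ioo_subset_Icc_self (hx.2 i)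

section IntegralIdentity

variable {ω : ℝ → ℝ} {g : ℝ → ℝ → ℝ}

theorem continuousOn_exp_sum_mul (hω : ContinuousOn ω (Set.Icc 0 1))
    (hg : ContinuousOn (fun p : ℝ × ℝ => g p.1 p.2) (Set.Icc 0 1 ×ˢ Set.Icc 0 1))
    {N : ℕ} (a b : Fin N) :
    ContinuousOn (fun x : Fin N → ℝ => exp (∑ i, ω (x i)) * g (x a) (x b))
      (Set.univ.pi fun _ => Set.Icc 0 1) := by
  have hsum : ContinuousOn (fun x : Fin N → ℝ => ∑ i, ω (x i))
      (Set.univ.pi fun _ => Set.Icc 0 1) :=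
    continuousOn_finsetSum _ fun i _ =>
      hω.comp (continuous_apply i).continuousOn fun x hx => hx i (Set.mem_univ i)
  have hg' : ContinuousOn (fun x : Fin N → ℝ => g (x a) (x b))
      (Set.univ.pi fun _ => Set.Icc 0 1) :=
    hg.comp (f := fun x : Fin N → ℝ => (x a, x b))
      ((continuous_apply a).prodMk (continuous_apply b)).continuousOn
      fun x (hx : x ∈ Set.univ.pi fun _ => Set.Icc (0 : ℝ) 1) =>
        ⟨hx a (Set.mem_univ a), hx b (Set.mem_univ b)⟩
  exact (continuous_exp.comp_continuousOn hsum).mul hg'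

theorem sum_perm_indicator_mul_prod_exp (p m : ℕ) {x : Fin (p + 2 + m) → ℝ} (hx : StrictMono x) :
    ∑ σ : Equiv.Perm (Fin (p + 2 + m)),
        {y | StrictMono y}.indicator (fun y => exp (∑ i, ω (y i)) * g (y 0) (y (Fin.last _)))
          (x ∘ σ ∘ Fin.castAdd m) * ∏ l, exp (ω (x (σ (Fin.natAdd (p + 2) l)))) =
      m ! * (exp (∑ i, ω (x i)) *
        ∑ i, ∑ j, if i < j then ((#(Ioo i j)).choose p : ℝ) * g (x i) (x j) else 0) := by
  have term (σ : Equiv.Perm (Fin (p + 2 + m))) :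
      {y | StrictMono y}.indicator (fun y => exp (∑ i, ω (y i)) * g (y 0) (y (Fin.last _)))
          (x ∘ σ ∘ Fin.castAdd m) * ∏ l, exp (ω (x (σ (Fin.natAdd (p + 2) l)))) =
        exp (∑ i, ω (x i)) * if StrictMono (⇑σ ∘ Fin.castAdd m) then
          g (x (σ (Fin.castAdd m 0))) (x (σ (Fin.castAdd m (Fin.last _)))) else 0 := by
    have mono_iff : StrictMono (x ∘ σ ∘ Fin.castAdd m) ↔ StrictMono (⇑σ ∘ Fin.castAdd m) :=
      ⟨fun h _ _ hab => hx.lt_iff_lt.1 (h hab), hx.comp⟩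
    have exp_split : exp (∑ i, ω (x (σ (Fin.castAdd m i)))) *
        ∏ l, exp (ω (x (σ (Fin.natAdd (p + 2) l)))) = exp (∑ i, ω (x i)) := by
      rw [← exp_sum, ← exp_add, ← Fin.sum_univ_add (f := fun i => ω (x (σ i))),
        Equiv.sum_comp σ (fun i => ω (x i))]
    by_cases h : StrictMono (⇑σ ∘ Fin.castAdd m)
    · rw [Set.indicator_of_mem (mono_iff.2 h), if_pos h, ← exp_split]
      simp only [Function.comp_apply]
      ring
    · rw [Set.indicator_of_notMem (mt mono_iff.1 h), if_neg h, zero_mul, mul_zero]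
  rw [Fintype.sum_congr _ _ term, ← mul_sum,
    sum_perm_strictMono_comp_castAdd p m fun i j => g (x i) (x j)]
  simp only [nsmul_eq_mul]
  ring


theorem integral_pow_mul_setIntegral_orderedSimplex (hω : ContinuousOn ω (Set.Icc 0 1))
    (hg : ContinuousOn (fun p : ℝ × ℝ => g p.1 p.2) (Set.Icc 0 1 ×ˢ Set.Icc 0 1)) (p m : ℕ) :
    (∫ s in Set.Ioo (0 : ℝ) 1, exp (ω s)) ^ m *
        ∫ s in orderedSimplex (p + 2), exp (∑ i, ω (s i)) * g (s 0) (s (Fin.last _)) =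
      m ! * ∫ s in orderedSimplex (p + 2 + m), exp (∑ i, ω (s i)) *
        ∑ i, ∑ j, if i < j then ((#(Ioo i j)).choose p : ℝ) * g (s i) (s j) else 0 := by
  set ν := volume.restrict (Set.Ioo (0 : ℝ) 1)
  have restrict_strictMono (N : ℕ) : (Measure.pi fun _ : Fin N => ν).restrict {x | StrictMono x} =
      volume.restrict (orderedSimplex N) :=
    restrict_pi_restrict_setOf_strictMono N _
  set F : (Fin (p + 2) → ℝ) → ℝ :=
    {y | StrictMono y}.indicator fun y => exp (∑ i, ω (y i)) * g (y 0) (y (Fin.last _))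
  set G : (Fin m → ℝ) → ℝ := fun z => ∏ l, exp (ω (z l))
  have integral_F : ∫ y, F y ∂(Measure.pi fun _ => ν) =
      ∫ s in orderedSimplex (p + 2), exp (∑ i, ω (s i)) * g (s 0) (s (Fin.last _)) := by
    rw [integral_indicator measurableSet_setOf_strictMono, restrict_strictMono]
  have integral_G :
      ∫ z, G z ∂(Measure.pi fun _ => ν) = (∫ s in Set.Ioo (0 : ℝ) 1, exp (ω s)) ^ m := by
    rw [integral_fintype_prod_eq_pow (fun s => exp (ω s)), Fintype.card_fin]
  have integrable_F : Integrable F (Measure.pi fun _ => ν) := by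
    rw [integrable_indicator_iff measurableSet_setOf_strictMono, IntegrableOn, restrict_strictMono]
    exact integrableOn_orderedSimplex_of_continuousOn (continuousOn_exp_sum_mul hω hg _ _)
  have integrable_G : Integrable G (Measure.pi fun _ => ν) :=
    Integrable.fintype_prod fun _ =>
      (continuous_exp.comp_continuousOn hω).integrableOn_Icc.mono_set Set.Ioo_subset_Icc_self
  rw [← integral_F, ← integral_G, mul_comm, ← integral_comp_castAdd_mul_comp_natAdd,
    integral_eq_setIntegral_strictMono_sum_perm (ae_injective_pi_volume_restrict _)
      (integrable_F.comp_castAdd_mul_comp_natAdd integrable_G)]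
  refine (setIntegral_congr_fun measurableSet_setOf_strictMono fun x hx =>
    sum_perm_indicator_mul_prod_exp p m hx).trans ?_
  rw [integral_const_mul, restrict_strictMono]

end IntegralIdentity

/-- **Intermittency derivative of integer moments** (integral identity).
For continuous `ω : [0,1] → ℝ`, `g : [0,1]² → ℝ` and `2 ≤ k ≤ n`,
`(1/(n−k)!) (∫₀¹ e^{ω})^{n−k} ∫_{simplex_k} e^{ω(s₁)+⋯+ω(s_k)} g(s₁,s_k)`
equals the simplex-`n` integral of `e^{ω(s₁)+⋯+ω(s_n)}` times
`Σ_{i<j, j−i≥k−1} C(j−i−1,k−2) g(s_i,s_j)`. -/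
theorem intermittency_derivative_integer_moments
    (ω : ℝ → ℝ) (g : ℝ → ℝ → ℝ)
    (hω : ContinuousOn ω (Set.Icc 0 1))
    (hg : ContinuousOn (fun p : ℝ × ℝ => g p.1 p.2) (Set.Icc 0 1 ×ˢ Set.Icc 0 1))
    (n k : ℕ) (hk : 2 ≤ k) (hkn : k ≤ n) :
    (1 / (Nat.factorial (n - k) : ℝ)) *
        (∫ s in Set.Ioo (0 : ℝ) 1, Real.exp (ω s)) ^ (n - k) *
        (∫ s in orderedSimplex k,
          Real.exp (∑ i, ω (s i)) * g (s ⟨0, by omega⟩) (s ⟨k - 1, by omega⟩)) =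
      ∫ s in orderedSimplex n,
        Real.exp (∑ i, ω (s i)) *
          ∑ i : Fin n, ∑ j : Fin n,
            if (i : ℕ) < (j : ℕ) ∧ k - 1 ≤ (j : ℕ) - (i : ℕ) then
              (((j : ℕ) - (i : ℕ) - 1).choose (k - 2) : ℝ) * g (s i) (s j)
            else 0 := by
  simp only [Fin.ite_choose_sub_eq_ite_choose_card_Ioo]
  obtain ⟨p, rfl⟩ : ∃ p, k = p + 2 := ⟨k - 2, by omega⟩
  obtain ⟨m, rfl⟩ : ∃ m, n = p + 2 + m := ⟨n - (p + 2), by omega⟩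
  simp only [Nat.add_sub_cancel_left, Nat.add_sub_cancel]
  show 1 / (m ! : ℝ) * _ ^ m *
    ∫ s in orderedSimplex (p + 2), exp (∑ i, ω (s i)) * g (s 0) (s (Fin.last _)) = _
  rw [mul_assoc, integral_pow_mul_setIntegral_orderedSimplex hω hg p m, one_div,
    inv_mul_cancel_left₀ (by positivity)]
end

section
/- Let n ≥ 3 be an integer, let σ² be a real number, and let 𝓜 be a (nonnegative) measure on ℝ∖{0} such that u ↦ e^{ju}(e^u−1)² is 𝓜-integrable for all integers 0 ≤ j ≤ n−2. Define d(m) = σ² + ∫_{ℝ∖{0}} e^{(m−1)u}(e^u−1)² d𝓜(u). Then Σ_{k=0}^{n−2} (−1)^k C(n−2, k) · d(n−1−k) = ∫_{ℝ∖{0}} (e^u−1)^n d𝓜(u), where C(·,·) denotes the binomial coefficient. In particular, the Gaussian component σ² cancels out of this alternating sum when n ≥ 3. -/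
open MeasureTheory Real

lemma sub_one_pow_expand (x : ℝ) (N : ℕ) :
    ∑ k ∈ Finset.range (N + 1), (-1 : ℝ) ^ k * (N.choose k : ℝ) * x ^ (N - k)
      = (x - 1) ^ N := by
  rw [sub_pow]
  rw [← Finset.sum_range_reflect]
  simp only [Nat.add_sub_cancel]
  refine Finset.sum_congr rfl ?_
  intro k hk
  rw [Finset.mem_range] at hk
  have h1 : N - (N - k) = k := by omega
  have h2 : N.choose (N - k) = N.choose k := Nat.choose_symm (by omega)
  have h3 : (-1 : ℝ) ^ (k + N) = (-1 : ℝ) ^ (N - k) := by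
    rw [show k + N = N - k + 2 * k by omega, pow_add, pow_mul]
    simp
  rw [h3, one_pow, h1, h2]
  ring

/-- The alternating-sum simplification of the Combinatorial Property lemma:
for `n ≥ 3`, `Σ_{k=0}^{n−2} (−1)^k C(n−2,k) d(n−1−k) = ∫ (e^u−1)^n d𝓜(u)`,
where `d(m) = σ² + ∫ e^{(m−1)u}(e^u−1)² d𝓜(u)`; the Gaussian component `σ²`
cancels out. -/
theorem alternating_sum_of_d
    (n : ℕ) (hn : 3 ≤ n)
    (σsq : ℝ)
    (M : Measure ℝ) (hM0 : M {0} = 0)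
    (hint : ∀ j : ℕ, j ≤ n - 2 →
      Integrable (fun u => Real.exp (j * u) * (Real.exp u - 1) ^ 2) M)
    (d : ℕ → ℝ)
    (hd : ∀ m : ℕ, d m = σsq + ∫ u, Real.exp (((m - 1 : ℕ) : ℝ) * u) * (Real.exp u - 1) ^ 2 ∂M) :
    ∑ k ∈ Finset.range (n - 1),
        (-1 : ℝ) ^ k * ((n - 2).choose k : ℝ) * d (n - 1 - k) =
      ∫ u, (Real.exp u - 1) ^ n ∂M := by
  obtain ⟨m, rfl⟩ : ∃ m, n = m + 3 := ⟨n - 3, by omega⟩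
  have h1 : m + 3 - 1 = (m + 1) + 1 := by omega
  have h2 : m + 3 - 2 = m + 1 := by omega
  set N := m + 1 with hNdef
  rw [h1, h2]
  -- rewrite each d term
  have hterm : ∀ k ∈ Finset.range (N + 1),
      (-1 : ℝ) ^ k * (N.choose k : ℝ) * d (N + 1 - k)
        = (-1 : ℝ) ^ k * (N.choose k : ℝ) * σsq
          + (-1 : ℝ) ^ k * (N.choose k : ℝ) *
            ∫ u, Real.exp (((N - k : ℕ) : ℝ) * u) * (Real.exp u - 1) ^ 2 ∂M := by
    intro k hk
    rw [Finset.mem_range] at hk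
    have : N + 1 - k - 1 = N - k := by omega
    rw [hd, this, mul_add]
  rw [Finset.sum_congr rfl hterm, Finset.sum_add_distrib]
  -- the σsq part vanishes
  have hzero : ∑ k ∈ Finset.range (N + 1), (-1 : ℝ) ^ k * (N.choose k : ℝ) * σsq = 0 := by
    rw [← Finset.sum_mul]
    have := Int.alternating_sum_range_choose_of_ne (n := N) (by omega)
    have hc : ∑ k ∈ Finset.range (N + 1), (-1 : ℝ) ^ k * (N.choose k : ℝ) = 0 := by
      have := congrArg (Int.cast : ℤ → ℝ) this
      push_cast at this
      simpa using this
    rw [hc, zero_mul]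
  rw [hzero, zero_add]
  -- pull the sum into the integral
  have hintk : ∀ k ∈ Finset.range (N + 1),
      Integrable (fun u => (-1 : ℝ) ^ k * (N.choose k : ℝ) *
        (Real.exp (((N - k : ℕ) : ℝ) * u) * (Real.exp u - 1) ^ 2)) M := by
    intro k hk
    exact (hint (N - k) (by omega)).const_mul _
  have hswap : ∑ k ∈ Finset.range (N + 1), (-1 : ℝ) ^ k * (N.choose k : ℝ) *
        ∫ u, Real.exp (((N - k : ℕ) : ℝ) * u) * (Real.exp u - 1) ^ 2 ∂M
      = ∫ u, ∑ k ∈ Finset.range (N + 1), (-1 : ℝ) ^ k * (N.choose k : ℝ) *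
          (Real.exp (((N - k : ℕ) : ℝ) * u) * (Real.exp u - 1) ^ 2) ∂M := by
    rw [integral_finset_sum _ hintk]
    exact Finset.sum_congr rfl fun k _ => (integral_const_mul _ _).symm
  rw [hswap]
  refine integral_congr_ae (Filter.Eventually.of_forall fun u => ?_)
  have hexp : ∀ k : ℕ, Real.exp (((N - k : ℕ) : ℝ) * u) = Real.exp u ^ (N - k) := by
    intro k
    rw [← Real.exp_nat_mul]
  calc ∑ k ∈ Finset.range (N + 1), (-1 : ℝ) ^ k * (N.choose k : ℝ) *
          (Real.exp (((N - k : ℕ) : ℝ) * u) * (Real.exp u - 1) ^ 2)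
      = (∑ k ∈ Finset.range (N + 1), (-1 : ℝ) ^ k * (N.choose k : ℝ) *
          Real.exp u ^ (N - k)) * (Real.exp u - 1) ^ 2 := by
        rw [Finset.sum_mul]
        exact Finset.sum_congr rfl fun k _ => by rw [hexp]; ring
    _ = (Real.exp u - 1) ^ N * (Real.exp u - 1) ^ 2 := by rw [sub_one_pow_expand]
    _ = (Real.exp u - 1) ^ (m + 3) := by rw [← pow_add]
end

section
/- For u ∈ ℝ and 0 < ε ≤ 1, let A_ε(u) = { (t, l) ∈ ℝ × (0, ∞) : (ε ≤ l ≤ 1 and |t − u| ≤ l/2) or (l ≥ 1 and |t − u| ≤ 1/2) } be the Bacry–Muzy conical set, and let ρ be the measure on ℝ × (0, ∞) with density 1/l² with respect to the Lebesgue measure dt dl. Then for all u, v ∈ ℝ, the measure ρ(A_ε(u) ∩ A_ε(v)) equals: −log|u − v| if ε ≤ |u − v| ≤ 1; −log ε + (1 − |u − v|/ε) if 0 ≤ |u − v| < ε; and 0 if |u − v| > 1. -/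
/-! Slicing at scale `l`, the section of `A_ε(u) ∩ A_ε(v)` is empty for `l < ε` and otherwise
the intersection of two intervals of length `min l 1` centred at `u` and `v`, of length
`(min l 1 - |u - v|)₊`. Hence `ρ(A_ε(u) ∩ A_ε(v)) = ∫_{l ≥ ε} (min l 1 - |u - v|)₊ / l² dl`. The
integrand vanishes below `a = max ε |u - v|`, and `log l + |u - v| / l` on `[a, 1]` and
`-(1 - |u - v|) / l` on `[1, ∞)` are antiderivatives, which gives `1 - log a - |u - v| / a`. -/

open MeasureTheory Real

/-- The Bacry–Muzy conical set `A_ε(u)` in the time-scale half-plane, viewed as a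
subset of `ℝ × ℝ` (all its points have positive second coordinate). -/
def coneSet (ε u : ℝ) : Set (ℝ × ℝ) :=
  {p | (ε ≤ p.2 ∧ p.2 ≤ 1 ∧ |p.1 - u| ≤ p.2 / 2) ∨ (1 ≤ p.2 ∧ |p.1 - u| ≤ 1 / 2)}

/-- `ρ(A) = ∫∫_A (1/l²) dt dl`, the intensity measure of the canonical
Bacry–Muzy construction. -/
noncomputable def coneRho (A : Set (ℝ × ℝ)) : ENNReal :=
  ∫⁻ p in A, ENNReal.ofReal (1 / p.2 ^ 2)

open Set Filter Topology Metric

section FTC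

variable {g g' : ℝ → ℝ} {a b l : ℝ}

theorem lintegral_Ioc_ofReal_deriv_of_nonneg (hab : a ≤ b) (hcont : ContinuousOn g (Icc a b))
    (hderiv : ∀ x ∈ Ioo a b, HasDerivAt g (g' x) x) (hpos : ∀ x ∈ Ioc a b, 0 ≤ g' x) :
    ∫⁻ x in Ioc a b, ENNReal.ofReal (g' x) = ENNReal.ofReal (g b - g a) := by
  have hint : IntegrableOn g' (Ioc a b) :=
    intervalIntegral.integrableOn_deriv_of_nonneg hcont hderiv fun x hx ↦
      hpos x (Ioo_subset_Ioc_self hx)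
  rw [← ofReal_integral_eq_lintegral_ofReal hint
      ((ae_restrict_iff' measurableSet_Ioc).2 (.of_forall hpos)),
    ← intervalIntegral.integral_of_le hab,
    intervalIntegral.integral_eq_sub_of_hasDerivAt_of_le hab hcont hderiv
      ((intervalIntegrable_iff_integrableOn_Ioc_of_le hab).2 hint)]

theorem lintegral_Ioi_ofReal_deriv_of_nonneg (hcont : ContinuousWithinAt g (Ici a) a)
    (hderiv : ∀ x ∈ Ioi a, HasDerivAt g (g' x) x) (hpos : ∀ x ∈ Ioi a, 0 ≤ g' x)
    (hg : Tendsto g atTop (𝓝 l)) :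
    ∫⁻ x in Ioi a, ENNReal.ofReal (g' x) = ENNReal.ofReal (l - g a) := by
  rw [← ofReal_integral_eq_lintegral_ofReal
      (integrableOn_Ioi_deriv_of_nonneg hcont hderiv hpos hg)
      ((ae_restrict_iff' measurableSet_Ioi).2 (.of_forall hpos)),
    integral_Ioi_of_hasDerivAt_of_nonneg hcont hderiv hpos hg]

end FTC

theorem hasDerivAt_const_div {c x : ℝ} (hx : x ≠ 0) :
    HasDerivAt (fun y ↦ c / y) (-(c / x ^ 2)) x := by
  simpa [div_eq_mul_inv] using (hasDerivAt_inv hx).const_mul c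

theorem Real.volume_closedBall_inter_closedBall (u v r : ℝ) :
    volume (closedBall u r ∩ closedBall v r) = ENNReal.ofReal (2 * r - dist u v) := by
  rw [Real.closedBall_eq_Icc, Real.closedBall_eq_Icc, Icc_inter_Icc, Real.volume_Icc,
    max_sub_sub_right, min_add_add_right, Real.dist_eq, ← max_sub_min_eq_abs']
  ring_nf

theorem setLIntegral_comp_snd {α β : Type*} [MeasurableSpace α] [MeasurableSpace β]
    {μ : Measure α} {ν : Measure β} [SFinite μ] [SFinite ν] {s : Set (α × β)}
    (hs : MeasurableSet s) {f : β → ENNReal} (hf : Measurable f) :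
    ∫⁻ p in s, f p.2 ∂μ.prod ν = ∫⁻ y, f y * μ ((fun x ↦ (x, y)) ⁻¹' s) ∂ν := by
  rw [← lintegral_indicator hs,
    lintegral_prod_symm (s.indicator fun p ↦ f p.2)
      ((hf.comp measurable_snd).indicator hs).aemeasurable]
  congr 1 with y
  rw [← lintegral_indicator_const (measurable_prodMk_right hs)]
  rfl

theorem lintegral_Ioc_sub_div_sq {a b d : ℝ} (ha : 0 < a) (hab : a ≤ b) (hd : d ≤ a) :
    ∫⁻ l in Ioc a b, ENNReal.ofReal ((l - d) / l ^ 2) =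
      ENNReal.ofReal (log b + d / b - (log a + d / a)) := by
  have hpos : ∀ x ∈ Icc a b, 0 < x := fun x hx ↦ ha.trans_le hx.1
  refine lintegral_Ioc_ofReal_deriv_of_nonneg (g := fun l ↦ log l + d / l) hab ?_ ?_ ?_
  · exact ContinuousOn.add (continuousOn_log.mono fun x hx ↦ (hpos x hx).ne')
      (continuousOn_const.div continuousOn_id fun x hx ↦ (hpos x hx).ne')
  · intro x hx
    have hx0 := (hpos x (Ioo_subset_Icc_self hx)).ne'
    refine ((hasDerivAt_log hx0).add (hasDerivAt_const_div hx0)).congr_deriv ?_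
    field_simp
    ring
  · intro x hx
    exact div_nonneg (by linarith [hx.1]) (sq_nonneg x)

theorem lintegral_Ioi_div_sq {b c : ℝ} (hb : 0 < b) (hc : 0 ≤ c) :
    ∫⁻ l in Ioi b, ENNReal.ofReal (c / l ^ 2) = ENNReal.ofReal (c / b) := by
  have hderiv : ∀ x ∈ Ioi b, HasDerivAt (fun l ↦ -(c / l)) (c / x ^ 2) x := fun x hx ↦
    (hasDerivAt_const_div (hb.trans hx).ne').neg.congr_deriv (neg_neg _)
  have hlim : Tendsto (fun l ↦ -(c / l)) atTop (𝓝 0) := by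
    simpa using (tendsto_const_nhds (x := c)).div_atTop tendsto_id |>.neg
  rw [lintegral_Ioi_ofReal_deriv_of_nonneg ?_ hderiv (fun x _ ↦ by positivity) hlim]
  · simp
  · exact (continuousAt_const.div continuousAt_id hb.ne').neg.continuousWithinAt

theorem lintegral_Ioi_min_sub_div_sq {a d : ℝ} (ha : 0 < a) (ha1 : a ≤ 1) (hd : d ≤ a) :
    ∫⁻ l in Ioi a, ENNReal.ofReal ((min l 1 - d) / l ^ 2) =
      ENNReal.ofReal (1 - log a - d / a) := by
  have hd1 : d ≤ 1 := hd.trans ha1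
  have hIoc : ∫⁻ l in Ioc a 1, ENNReal.ofReal ((min l 1 - d) / l ^ 2) =
      ENNReal.ofReal (d - log a - d / a) := by
    rw [setLIntegral_congr_fun measurableSet_Ioc fun l hl ↦ by rw [min_eq_left hl.2],
      lintegral_Ioc_sub_div_sq ha ha1 hd, log_one, div_one, zero_add, sub_add_eq_sub_sub]
  have hIoi :
      ∫⁻ l in Ioi 1, ENNReal.ofReal ((min l 1 - d) / l ^ 2) = ENNReal.ofReal (1 - d) := by
    rw [setLIntegral_congr_fun measurableSet_Ioi fun l hl ↦ by rw [min_eq_right (le_of_lt hl)],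
      lintegral_Ioi_div_sq one_pos (sub_nonneg.2 hd1), div_one]
  -- `log a ≤ a - 1` gives `d - log a - d / a ≥ (1 - a) * (1 - d / a) ≥ 0`
  have hnonneg : 0 ≤ d - log a - d / a := by
    have hda : d / a ≤ 1 := (div_le_one ha).2 hd
    nlinarith [log_le_sub_one_of_pos ha, mul_nonneg (sub_nonneg.2 ha1) (sub_nonneg.2 hda),
      mul_div_cancel₀ d ha.ne']
  rw [← Ioc_union_Ioi_eq_Ioi ha1, lintegral_union measurableSet_Ioi (Ioc_disjoint_Ioi le_rfl),
    hIoc, hIoi, ← ENNReal.ofReal_add hnonneg (sub_nonneg.2 hd1)]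
  ring_nf

theorem ofReal_min_sub_div_sq_eq_zero {d l : ℝ} (h : min l 1 ≤ d) :
    ENNReal.ofReal ((min l 1 - d) / l ^ 2) = 0 :=
  ENNReal.ofReal_of_nonpos (div_nonpos_of_nonpos_of_nonneg (sub_nonpos.2 h) (sq_nonneg l))

theorem setLIntegral_Ici_min_sub_div_sq_eq_Ioi_max (ε d : ℝ) :
    ∫⁻ l in Ici ε, ENNReal.ofReal ((min l 1 - d) / l ^ 2) =
      ∫⁻ l in Ioi (max ε d), ENNReal.ofReal ((min l 1 - d) / l ^ 2) := by
  have hvanish : ∫⁻ l in Ico ε (max ε d), ENNReal.ofReal ((min l 1 - d) / l ^ 2) = 0 := by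
    refine (setLIntegral_congr_fun measurableSet_Ico fun l hl ↦ ?_).trans lintegral_zero
    have hld : l < d := (lt_max_iff.1 hl.2).resolve_left hl.1.not_gt
    exact ofReal_min_sub_div_sq_eq_zero ((min_le_left l 1).trans hld.le)
  rw [← Ico_union_Ici_eq_Ici (le_max_left ε d),
    lintegral_union measurableSet_Ici (disjoint_left.2 fun _ hx hx' ↦ hx.2.not_ge hx'),
    hvanish, zero_add, setLIntegral_congr Ioi_ae_eq_Ici]

theorem coneSet_eq {ε : ℝ} (hε1 : ε ≤ 1) (u : ℝ) :
    coneSet ε u = {p | ε ≤ p.2 ∧ p.1 ∈ closedBall u (min p.2 1 / 2)} := by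
  ext ⟨t, l⟩
  simp only [coneSet, mem_ofPred_eq, mem_closedBall, Real.dist_eq]
  rcases le_total l 1 with hl | hl <;> simp only [hl, min_eq_left, min_eq_right] <;> grind

theorem measurableSet_coneSet (ε u : ℝ) : MeasurableSet (coneSet ε u) := by
  unfold coneSet
  measurability

theorem volume_preimage_coneSet_inter {ε : ℝ} (hε1 : ε ≤ 1) (u v l : ℝ) :
    volume ((fun t ↦ (t, l)) ⁻¹' (coneSet ε u ∩ coneSet ε v)) =
      (Ici ε).indicator (fun l ↦ ENNReal.ofReal (min l 1 - |u - v|)) l := by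
  by_cases hl : ε ≤ l
  · rw [indicator_of_mem (mem_Ici.2 hl), ← Real.dist_eq,
      show min l 1 = 2 * (min l 1 / 2) by ring, ← Real.volume_closedBall_inter_closedBall]
    congr 1 with t
    simp [coneSet_eq hε1, hl]
  · rw [indicator_of_notMem (notMem_Ici.2 (not_le.1 hl))]
    convert measure_empty (μ := volume)
    ext t
    simp [coneSet_eq hε1, hl]

theorem coneRho_coneSet_inter {ε : ℝ} (hε1 : ε ≤ 1) (u v : ℝ) :
    coneRho (coneSet ε u ∩ coneSet ε v) =
      ∫⁻ l in Ici ε, ENNReal.ofReal ((min l 1 - |u - v|) / l ^ 2) := by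
  rw [coneRho, Measure.volume_eq_prod,
    setLIntegral_comp_snd (f := fun l ↦ ENNReal.ofReal (1 / l ^ 2))
      ((measurableSet_coneSet ε u).inter (measurableSet_coneSet ε v)) (by fun_prop),
    ← lintegral_indicator measurableSet_Ici]
  congr 1 with l
  rw [volume_preimage_coneSet_inter hε1]
  by_cases hl : l ∈ Ici ε
  · rw [indicator_of_mem hl, indicator_of_mem hl, ← ENNReal.ofReal_mul (by positivity),
      one_div_mul_eq_div]
  · rw [indicator_of_notMem hl, indicator_of_notMem hl, mul_zero]

/-- Intersection intensity of Bacry–Muzy cones: for `0 < ε ≤ 1`,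
`ρ(A_ε(u) ∩ A_ε(v))` equals `−log|u−v|` if `ε ≤ |u−v| ≤ 1`,
`−log ε + (1 − |u−v|/ε)` if `|u−v| < ε`, and `0` if `|u−v| > 1`. -/
theorem cone_intersection_intensity
    (ε u v : ℝ) (hε : 0 < ε) (hε1 : ε ≤ 1) :
    (ε ≤ |u - v| → |u - v| ≤ 1 →
        coneRho (coneSet ε u ∩ coneSet ε v) = ENNReal.ofReal (-Real.log |u - v|)) ∧
      (|u - v| < ε →
        coneRho (coneSet ε u ∩ coneSet ε v) =
          ENNReal.ofReal (-Real.log ε + (1 - |u - v| / ε))) ∧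
      (1 < |u - v| → coneRho (coneSet ε u ∩ coneSet ε v) = 0) := by
  rw [coneRho_coneSet_inter hε1, setLIntegral_Ici_min_sub_div_sq_eq_Ioi_max]
  refine ⟨fun hεd hd1 ↦ ?_, fun hdε ↦ ?_, fun h1d ↦ ?_⟩
  · have hd : 0 < |u - v| := hε.trans_le hεd
    rw [max_eq_right hεd, lintegral_Ioi_min_sub_div_sq hd hd1 le_rfl, div_self hd.ne']
    ring_nf
  · rw [max_eq_left hdε.le, lintegral_Ioi_min_sub_div_sq hε hε1 hdε.le]
    ring_nf
  · refine (setLIntegral_congr_fun measurableSet_Ioi fun l _ ↦ ?_).trans lintegral_zero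
    exact ofReal_min_sub_div_sq_eq_zero ((min_le_right l 1).trans h1d.le)
end

section
/- Let r be a function that is positive, smooth and even on (−1, 0) ∪ (0, 1), satisfies lim_{t→0⁺} t·(d/dt) log r(t) = 1 and r(1) = 1 (with r extended smoothly to t = 1), and suppose the function f defined by f(l) = −l²·(d²/dl²) log r(l) for 0 < l < 1 and f(l) = (d/dz)|_{z=1} log r(z) for l ≥ 1 is nonnegative. Let ρ be the measure on ℝ × (0, ∞) with density f(l)/l² with respect to Lebesgue measure dt dl, and for u ∈ ℝ, 0 < ε ≤ 1 let A_ε(u) = { (t, l) : (ε ≤ l ≤ 1 and |t − u| ≤ l/2) or (l ≥ 1 and |t − u| ≤ 1/2) }. Then for all u, v ∈ ℝ: ρ(A_ε(u) ∩ A_ε(v)) = −log r(|u − v|) if ε ≤ |u − v| ≤ 1; ρ(A_ε(u) ∩ A_ε(v)) = −log r(ε) + (1 − |u − v|/ε)·ε·(d/dε) log r(ε) if |u − v| < ε; and ρ(A_ε(u) ∩ A_ε(v)) = 0 if |u − v| > 1. -/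
open MeasureTheory Real

open Set Filter
open scoped ENNReal

lemma deriv_tendsto_left {g g' : ℝ → ℝ} {c : ℝ}
    (hd : ∀ x ∈ Set.Ioo (0:ℝ) 1, HasDerivAt g (g' x) x)
    (hanti : AntitoneOn g' (Set.Ioo 0 1))
    (hc : HasDerivAt g c 1) :
    Filter.Tendsto g' (nhdsWithin 1 (Set.Iio 1)) (nhds c) := by
  have hcontg : ∀ x ∈ Set.Ioc (0:ℝ) 1, ContinuousAt g x := by
    intro x hx
    rcases eq_or_lt_of_le hx.2 with h1 | h1
    · rw [h1]; exact hc.continuousAt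
    · exact (hd x ⟨hx.1, h1⟩).continuousAt
  have mvt : ∀ a b : ℝ, 0 < a → a < b → b ≤ 1 →
      ∃ ξ ∈ Set.Ioo a b, g' ξ = (g b - g a) / (b - a) := by
    intro a b ha hab hb1
    have hcont : ContinuousOn g (Set.Icc a b) := fun x hx =>
      (hcontg x ⟨ha.trans_le hx.1, hx.2.trans hb1⟩).continuousWithinAt
    have hderiv : ∀ x ∈ Set.Ioo a b, HasDerivAt g (g' x) x := fun x hx =>
      hd x ⟨ha.trans hx.1, lt_of_lt_of_le hx.2 hb1⟩
    exact exists_hasDerivAt_eq_slope g g' hab hcont hderiv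
  set sl : ℝ → ℝ := fun x => (g x - g 1) / (x - 1) with hsl
  have hslc : Tendsto sl (nhdsWithin 1 (Set.Iio 1)) (nhds c) := by
    have h0 := hasDerivAt_iff_tendsto_slope.1 hc
    have h1 : Tendsto (slope g 1) (nhdsWithin 1 (Set.Iio 1)) (nhds c) :=
      h0.mono_left (nhdsWithin_mono 1 (fun x hx => ne_of_lt hx))
    refine h1.congr (fun x => ?_)
    rw [slope_def_field, hsl]
  have hlow : ∀ᶠ x in nhdsWithin 1 (Set.Iio 1), sl x ≤ g' x := by
    filter_upwards [Ioo_mem_nhdsLT (show (1:ℝ)/2 < 1 by norm_num)] with x hx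
    obtain ⟨ξ, hξ, hslope⟩ := mvt x 1 (by linarith [hx.1]) hx.2 le_rfl
    have h1 : g' ξ ≤ g' x :=
      hanti ⟨by linarith [hx.1], hx.2⟩ ⟨by linarith [hx.1, hξ.1], hξ.2⟩ hξ.1.le
    have h2 : sl x = g' ξ := by
      rw [hslope, hsl]
      have h3 : x - 1 ≠ 0 := by intro h; nlinarith [hx.2]
      have h4 : 1 - x ≠ 0 := by intro h; nlinarith [hx.2]
      field_simp
      ring
    linarith
  have hupper : ∀ᶠ x in nhdsWithin 1 (Set.Iio 1), g' x ≤ 2 * sl (2*x - 1) - sl x := by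
    filter_upwards [Ioo_mem_nhdsLT (show (1:ℝ)/2 < 1 by norm_num)] with x hx
    obtain ⟨ξ, hξ, hslope⟩ := mvt (2*x-1) x (by linarith [hx.1]) (by linarith [hx.2]) hx.2.le
    have h1 : g' x ≤ g' ξ :=
      hanti ⟨by linarith [hx.1, hξ.1], hξ.2.trans hx.2⟩ ⟨by linarith [hx.1], hx.2⟩ hξ.2.le
    have h2 : g' ξ = 2 * sl (2*x - 1) - sl x := by
      rw [hslope, hsl]
      have h3 : x - 1 ≠ 0 := by intro h; nlinarith [hx.2]
      have h4 : 2*x - 1 - 1 ≠ 0 := by intro h; nlinarith [hx.2]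
      have h5 : x - (2*x - 1) ≠ 0 := by intro h; nlinarith [hx.2]
      have h6 : 1 - x ≠ 0 := by intro h; nlinarith [hx.2]
      field_simp
      ring
    linarith
  have hupc : Tendsto (fun x => 2 * sl (2*x - 1) - sl x)
      (nhdsWithin 1 (Set.Iio 1)) (nhds c) := by
    have h2x : Tendsto (fun x : ℝ => 2*x - 1) (nhdsWithin 1 (Set.Iio 1))
        (nhdsWithin 1 (Set.Iio 1)) := by
      apply tendsto_nhdsWithin_of_tendsto_nhds_of_eventually_within
      · have hcont : Tendsto (fun x : ℝ => 2*x - 1) (nhds 1) (nhds (2*1 - 1)) :=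
          ((continuous_const.mul continuous_id).sub continuous_const).tendsto 1
        rw [show (2:ℝ)*1 - 1 = 1 by norm_num] at hcont
        exact hcont.mono_left nhdsWithin_le_nhds
      · filter_upwards [self_mem_nhdsWithin] with x hx
        simp only [Set.mem_Iio] at hx ⊢
        linarith
    have hcomp : Tendsto (fun x => sl (2*x - 1)) (nhdsWithin 1 (Set.Iio 1)) (nhds c) :=
      hslc.comp h2x
    have := (hcomp.const_mul 2).sub hslc
    rw [show 2*c - c = c by ring] at this
    exact this
  exact tendsto_of_tendsto_of_tendsto_of_le_of_le' hslc hupc hlow hupper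

lemma tail_piece {c : ℝ} (hc : 0 ≤ c) :
    (∫⁻ l in Set.Ioi (1:ℝ), ENNReal.ofReal (c / l ^ 2)) = ENNReal.ofReal c := by
  have hd : ∀ x ∈ Set.Ioi (1:ℝ), HasDerivAt (fun y : ℝ => -(c * y⁻¹)) (c / x ^ 2) x := by
    intro x hx
    have hx0 : x ≠ 0 := by intro h; rw [h] at hx; exact absurd hx (by norm_num)
    have := ((hasDerivAt_inv hx0).const_mul c).neg
    exact this.congr_deriv (by field_simp)
  have hcont : ContinuousWithinAt (fun y : ℝ => -(c * y⁻¹)) (Set.Ici 1) 1 := by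
    apply ContinuousAt.continuousWithinAt
    have : (1:ℝ) ≠ 0 := one_ne_zero
    fun_prop (disch := norm_num)
  have htend : Tendsto (fun y : ℝ => -(c * y⁻¹)) atTop (nhds 0) := by
    have := (tendsto_inv_atTop_zero.const_mul c).neg
    simpa using this
  have hnonneg : ∀ x ∈ Set.Ioi (1:ℝ), 0 ≤ c / x ^ 2 := fun x _ =>
    div_nonneg hc (sq_nonneg x)
  have hint : IntegrableOn (fun x : ℝ => c / x ^ 2) (Set.Ioi 1) :=
    integrableOn_Ioi_deriv_of_nonneg hcont hd hnonneg htend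
  have heq : (∫ x in Set.Ioi (1:ℝ), c / x ^ 2) = 0 - -(c * 1⁻¹) :=
    integral_Ioi_of_hasDerivAt_of_nonneg hcont hd hnonneg htend
  rw [← ofReal_integral_eq_lintegral_ofReal hint (Filter.Eventually.of_forall fun x =>
    div_nonneg hc (sq_nonneg x))]
  rw [heq]
  norm_num

lemma ftc_piece {g g' g'' : ℝ → ℝ} {c d a : ℝ}
    (hd1 : ∀ x ∈ Set.Ioo (0:ℝ) 1, HasDerivAt g (g' x) x)
    (hd2 : ∀ x ∈ Set.Ioo (0:ℝ) 1, HasDerivAt g' (g'' x) x)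
    (hg2 : ∀ x ∈ Set.Ioo (0:ℝ) 1, g'' x ≤ 0)
    (hgc : HasDerivAt g c 1)
    (hg'c : Filter.Tendsto g' (nhdsWithin 1 (Set.Iio 1)) (nhds c))
    (hg'1 : g' 1 = c)
    (ha : 0 < a) (had : d ≤ a) (ha1 : a ≤ 1) :
    (∫⁻ l in Set.Ioo a 1, ENNReal.ofReal ((l - d) * (-g'' l))) =
      ENNReal.ofReal ((g 1 - (1 - d) * c) - (g a - (a - d) * g' a)) ∧
      g a - (a - d) * g' a ≤ g 1 - (1 - d) * c := by
  rcases eq_or_lt_of_le ha1 with rfl | ha1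
  · constructor
    · simp [hg'1]
    · simp [hg'1]
  set F : ℝ → ℝ := fun x => g x - (x - d) * g' x with hF
  have hF1 : F 1 = g 1 - (1 - d) * c := by rw [hF]; simp [hg'1]
  have hFd : ∀ x ∈ Set.Ioo a 1, HasDerivAt F ((x - d) * (-g'' x)) x := by
    intro x hx
    have hx01 : x ∈ Set.Ioo (0:ℝ) 1 := ⟨ha.trans hx.1, hx.2⟩
    have h1 := (hd1 x hx01).sub
      ((((hasDerivAt_id x).sub_const d)).mul (hd2 x hx01))
    exact h1.congr_deriv (by simp only [id]; ring)
  have hFcont : ContinuousOn F (Set.Icc a 1) := by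
    intro x hx
    rcases eq_or_lt_of_le hx.2 with h1 | h1
    · -- x = 1
      subst h1
      have hg'w : ContinuousWithinAt g' (Set.Icc a 1) 1 := by
        unfold ContinuousWithinAt
        rw [hg'1]
        have hle : nhdsWithin 1 (Set.Icc a 1) ≤ nhdsWithin 1 (Set.Iic 1) :=
          nhdsWithin_mono 1 Set.Icc_subset_Iic_self
        have heq2 : nhdsWithin (1:ℝ) (Set.Iic 1) = nhdsWithin 1 (Set.Iio 1) ⊔ pure 1 := by
          rw [← Set.Iio_union_right, nhdsWithin_union, nhdsWithin_singleton]
        refine Filter.Tendsto.mono_left ?_ hle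
        rw [heq2, Filter.tendsto_sup]
        refine ⟨hg'c, ?_⟩
        have := tendsto_pure_nhds g' 1
        rwa [hg'1] at this
      exact ((hgc.continuousAt.continuousWithinAt).sub
        (((continuousWithinAt_id.sub continuousWithinAt_const)).mul hg'w))
    · have hx01 : x ∈ Set.Ioo (0:ℝ) 1 := ⟨ha.trans_le hx.1, h1⟩
      have : ContinuousAt F x :=
        ((hd1 x hx01).continuousAt).sub
          (((continuousAt_id.sub continuousAt_const)).mul (hd2 x hx01).continuousAt)
      exact this.continuousWithinAt
  have hpos : ∀ x ∈ Set.Ioo a 1, 0 ≤ (x - d) * (-g'' x) := fun x hx =>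
    mul_nonneg (by linarith [hx.1]) (by linarith [hg2 x ⟨ha.trans hx.1, hx.2⟩])
  have hintIoc : IntegrableOn (fun x => (x - d) * (-g'' x)) (Set.Ioc a 1) :=
    intervalIntegral.integrableOn_deriv_of_nonneg hFcont hFd hpos
  have hii : IntervalIntegrable (fun x => (x - d) * (-g'' x)) volume a 1 :=
    (intervalIntegrable_iff_integrableOn_Ioc_of_le ha1.le).2 hintIoc
  have hFTC : (∫ x in a..1, (x - d) * (-g'' x)) = F 1 - F a :=
    intervalIntegral.integral_eq_sub_of_hasDeriv_right_of_le ha1.le hFcont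
      (fun x hx => (hFd x hx).hasDerivWithinAt) hii
  have hIoo : (∫ x in Set.Ioo a 1, (x - d) * (-g'' x)) = F 1 - F a := by
    rw [← MeasureTheory.integral_Ioc_eq_integral_Ioo, ← intervalIntegral.integral_of_le ha1.le]
    exact hFTC
  have hnn : 0 ≤ F 1 - F a := by
    rw [← hIoo]
    apply MeasureTheory.setIntegral_nonneg measurableSet_Ioo
    intro x hx; exact hpos x hx
  constructor
  · rw [← ofReal_integral_eq_lintegral_ofReal (hintIoc.mono_set Set.Ioo_subset_Ioc_self)
      ((ae_restrict_iff' measurableSet_Ioo).2 (Filter.Eventually.of_forall hpos))]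
    rw [hIoo, hF1]
  · have hFa : F a = g a - (a - d) * g' a := rfl
    rw [hF1, hFa] at hnn
    linarith

/-- Intersection-intensity formula (Eq. `rhogeneral`) for the Bacry–Muzy
conical-set construction with a general intensity measure `ρ(dt dl) = f(l)/l² dt dl`
determined by a correlation profile `r`: here `r` is positive, smooth and even on
`(−1,0) ∪ (0,1)`, smooth at `1` with `r(1) = 1` and `(log r)'(1) = c`, satisfies
`t (log r)'(t) → 1` as `t → 0⁺`, and `f(l) = −l² (log r)''(l)` on `(0,1)`,
`f(l) = c` for `l ≥ 1`, with `f ≥ 0`.  Then `ρ(A_ε(u) ∩ A_ε(v))` equals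
`−log r(|u−v|)` for `ε ≤ |u−v| ≤ 1`, equals
`−log r(ε) + (1 − |u−v|/ε) ε (log r)'(ε)` for `|u−v| < ε`, and vanishes for
`|u−v| > 1`. -/
theorem cone_intersection_intensity_general
    (r : ℝ → ℝ) (c : ℝ) (f : ℝ → ℝ)
    (hpos : ∀ t ∈ Set.Ioo (-1 : ℝ) 1, t ≠ 0 → 0 < r t)
    (hsmooth : ContDiffOn ℝ (⊤ : ℕ∞) r (Set.Ioo (-1 : ℝ) 1 \ {0}))
    (heven : ∀ t ∈ Set.Ioo (-1 : ℝ) 1, r (-t) = r t)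
    (hlim : Filter.Tendsto (fun t => t * deriv (fun s => Real.log (r s)) t)
      (nhdsWithin 0 (Set.Ioi 0)) (nhds 1))
    (hr1 : r 1 = 1)
    (hc : HasDerivAt (fun z => Real.log (r z)) c 1)
    (hf1 : ∀ l : ℝ, 0 < l → l < 1 →
      f l = -(l ^ 2) * deriv (deriv (fun s => Real.log (r s))) l)
    (hf2 : ∀ l : ℝ, 1 ≤ l → f l = c)
    (hfpos : ∀ l : ℝ, 0 < l → 0 ≤ f l)
    (ε u v : ℝ) (hε : 0 < ε) (hε1 : ε ≤ 1) :
    (ε ≤ |u - v| → |u - v| ≤ 1 →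
        (∫⁻ p in coneSet ε u ∩ coneSet ε v, ENNReal.ofReal (f p.2 / p.2 ^ 2)) =
          ENNReal.ofReal (-Real.log (r |u - v|))) ∧
      (|u - v| < ε →
        (∫⁻ p in coneSet ε u ∩ coneSet ε v, ENNReal.ofReal (f p.2 / p.2 ^ 2)) =
          ENNReal.ofReal (-Real.log (r ε) +
            (1 - |u - v| / ε) * (ε * deriv (fun s => Real.log (r s)) ε))) ∧
      (1 < |u - v| →
        (∫⁻ p in coneSet ε u ∩ coneSet ε v, ENNReal.ofReal (f p.2 / p.2 ^ 2)) = 0) := by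
  have hd0 : 0 ≤ |u - v| := abs_nonneg _
  set d : ℝ := |u - v| with hddef
  set g : ℝ → ℝ := fun s => Real.log (r s) with hgdef
  set g1 : ℝ → ℝ := deriv g with hg1def
  set g2 : ℝ → ℝ := deriv g1 with hg2def
  -- smoothness facts
  have hsub : Set.Ioo (0:ℝ) 1 ⊆ Set.Ioo (-1:ℝ) 1 \ {0} := by
    intro x hx
    exact ⟨⟨by linarith [hx.1], hx.2⟩, by
      intro h; rw [Set.mem_singleton_iff] at h; rw [h] at hx; exact lt_irrefl 0 hx.1⟩
  have hgC : ContDiffOn ℝ (⊤ : ℕ∞) g (Set.Ioo 0 1) :=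
    (hsmooth.mono hsub).log (fun x hx =>
      (hpos x ⟨by linarith [hx.1], hx.2⟩ (ne_of_gt hx.1)).ne')
  have hopen : IsOpen (Set.Ioo (0:ℝ) 1) := isOpen_Ioo
  have hd1 : ∀ x ∈ Set.Ioo (0:ℝ) 1, HasDerivAt g (g1 x) x := by
    intro x hx
    exact ((hgC.contDiffAt (hopen.mem_nhds hx)).differentiableAt (by simp)).hasDerivAt
  have hg1C : ContDiffOn ℝ (⊤ : ℕ∞) g1 (Set.Ioo 0 1) := hgC.deriv_of_isOpen hopen (by simp)
  have hd2 : ∀ x ∈ Set.Ioo (0:ℝ) 1, HasDerivAt g1 (g2 x) x := by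
    intro x hx
    exact ((hg1C.contDiffAt (hopen.mem_nhds hx)).differentiableAt (by simp)).hasDerivAt
  have hg2le : ∀ x ∈ Set.Ioo (0:ℝ) 1, g2 x ≤ 0 := by
    intro x hx
    have h1 := hfpos x hx.1
    rw [hf1 x hx.1 hx.2] at h1
    nlinarith [pow_pos hx.1 2]
  have hanti : AntitoneOn g1 (Set.Ioo 0 1) := by
    apply antitoneOn_of_deriv_nonpos (convex_Ioo 0 1) hg1C.continuousOn
    · intro x hx
      rw [interior_Ioo] at hx
      exact (hd2 x hx).differentiableAt.differentiableWithinAt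
    · intro x hx
      rw [interior_Ioo] at hx
      rw [(hd2 x hx).deriv]
      exact hg2le x hx
  have hg1lim : Tendsto g1 (nhdsWithin 1 (Set.Iio 1)) (nhds c) :=
    deriv_tendsto_left hd1 hanti hc
  have hg'1 : g1 1 = c := hc.deriv
  have hcge : 0 ≤ c := by
    have := hfpos 1 one_pos; rwa [hf2 1 le_rfl] at this
  have hgone : g 1 = 0 := by rw [hgdef]; simp [hr1]
  -- measurability and geometry
  set S := coneSet ε u ∩ coneSet ε v with hSdef
  have hclosed : ∀ y : ℝ, IsClosed (coneSet ε y) := by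
    intro y
    have hrw : coneSet ε y = ({p : ℝ × ℝ | ε ≤ p.2} ∩ {p | p.2 ≤ 1} ∩
        {p | |p.1 - y| ≤ p.2 / 2}) ∪ ({p : ℝ × ℝ | 1 ≤ p.2} ∩ {p | |p.1 - y| ≤ 1 / 2}) := by
      ext p
      simp only [coneSet, Set.mem_setOf_eq, Set.mem_union, Set.mem_inter_iff]
      tauto
    rw [hrw]
    have habs : Continuous fun p : ℝ × ℝ => |p.1 - y| :=
      (continuous_fst.sub continuous_const).abs
    exact (((isClosed_le continuous_const continuous_snd).inter
        (isClosed_le continuous_snd continuous_const)).inter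
        (isClosed_le habs (continuous_snd.div_const 2))).union
      ((isClosed_le continuous_const continuous_snd).inter
        (isClosed_le habs continuous_const))
  have hSmeas : MeasurableSet S := ((hclosed u).inter (hclosed v)).measurableSet
  set f₀ : ℝ → ℝ := fun l => if l < 1 then -(l ^ 2) * g2 l else c with hf₀def
  have hf₀meas : Measurable f₀ := by
    apply Measurable.ite measurableSet_Iio
    · exact (measurable_id.pow_const 2).neg.mul (measurable_deriv _)
    · exact measurable_const
  set h₀ : ℝ × ℝ → ℝ≥0∞ := fun p => ENNReal.ofReal (f₀ p.2 / p.2 ^ 2) with hh₀def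
  have hh₀meas : Measurable h₀ :=
    ((hf₀meas.comp measurable_snd).div (measurable_snd.pow_const 2)).ennreal_ofReal
  have hSsnd : ∀ p ∈ S, ε ≤ p.2 ∧ 0 < p.2 := by
    intro p hp
    have h1 : ε ≤ p.2 := by
      rcases hp.1 with h | h
      · exact h.1
      · exact le_trans hε1 h.1
    exact ⟨h1, lt_of_lt_of_le hε h1⟩
  have step1 : (∫⁻ p in S, ENNReal.ofReal (f p.2 / p.2 ^ 2)) = ∫⁻ p in S, h₀ p := by
    apply setLIntegral_congr_fun hSmeas
    intro p hp
    obtain ⟨hpε, hp0⟩ := hSsnd p hp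
    rw [hh₀def]
    by_cases hl : p.2 < 1
    · simp only [hf₀def, if_pos hl]
      rw [hf1 p.2 hp0 hl]
    · simp only [hf₀def, if_neg hl]
      rw [hf2 p.2 (not_lt.1 hl)]
  set w : ℝ → ℝ := fun l => if l ≤ 1 then l / 2 else 1 / 2 with hwdef
  set Ψ : ℝ → ℝ≥0∞ :=
    fun l => ENNReal.ofReal (f₀ l / l ^ 2) * ENNReal.ofReal (2 * w l - d) with hΨdef
  have step2 : (∫⁻ p in S, h₀ p) = ∫⁻ l in Set.Ici ε, Ψ l := by
    rw [← lintegral_indicator hSmeas, ← lintegral_indicator measurableSet_Ici,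
      MeasureTheory.Measure.volume_eq_prod,
      MeasureTheory.lintegral_prod_symm _ ((hh₀meas.indicator hSmeas).aemeasurable)]
    congr 1
    funext l
    by_cases hl : ε ≤ l
    · have hl0 : 0 < l := lt_of_lt_of_le hε hl
      have hslice : ∀ t : ℝ, ((t, l) ∈ S) ↔
          t ∈ Set.Icc (max u v - w l) (min u v + w l) := by
        intro t
        have hcone : ∀ y : ℝ, ((t, l) ∈ coneSet ε y) ↔ |t - y| ≤ w l := by
          intro y
          rw [hwdef]
          by_cases h1 : l ≤ 1
          · simp only [if_pos h1]
            constructor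
            · rintro (⟨_, _, h⟩ | ⟨h1', h⟩)
              · exact h
              · have hl1 : l = 1 := le_antisymm h1 h1'
                rw [hl1]
                simpa using h
            · intro h; exact Or.inl ⟨hl, h1, h⟩
          · simp only [if_neg h1]
            push_neg at h1
            constructor
            · rintro (⟨_, h2, _⟩ | ⟨_, h⟩)
              · linarith
              · exact h
            · intro h; exact Or.inr ⟨h1.le, h⟩
        rw [hSdef, Set.mem_inter_iff, hcone u, hcone v, Set.mem_Icc]
        constructor
        · rintro ⟨h1, h2⟩
          rw [abs_le] at h1 h2
          constructor
          · have := max_le (show u ≤ t + w l by linarith [h1.1])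
              (show v ≤ t + w l by linarith [h2.1])
            linarith
          · have := le_min (show t - w l ≤ u by linarith [h1.2])
              (show t - w l ≤ v by linarith [h2.2])
            linarith
        · rintro ⟨h1, h2⟩
          have hu1 : u ≤ max u v := le_max_left u v
          have hv1 : v ≤ max u v := le_max_right u v
          have hu2 : min u v ≤ u := min_le_left u v
          have hv2 : min u v ≤ v := min_le_right u v
          constructor <;> rw [abs_le] <;> constructor <;> linarith
      have hfun : (fun t => Set.indicator S h₀ (t, l)) =
          Set.indicator (Set.Icc (max u v - w l) (min u v + w l))
            (fun _ => ENNReal.ofReal (f₀ l / l ^ 2)) := by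
        funext t
        by_cases ht : (t, l) ∈ S
        · rw [Set.indicator_of_mem ht, Set.indicator_of_mem ((hslice t).1 ht)]
        · rw [Set.indicator_of_notMem ht,
            Set.indicator_of_notMem (fun hmem => ht ((hslice t).2 hmem))]
      rw [hfun, lintegral_indicator measurableSet_Icc, setLIntegral_const, Real.volume_Icc,
        Set.indicator_of_mem (Set.mem_Ici.2 hl), hΨdef]
      have hlen : min u v + w l - (max u v - w l) = 2 * w l - d := by
        have h1 := max_sub_min_eq_abs u v
        rw [hddef, abs_sub_comm]
        linarith
      rw [hlen]
    · have hfun : (fun t => Set.indicator S h₀ (t, l)) = fun _ => (0 : ℝ≥0∞) := by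
        funext t
        apply Set.indicator_of_notMem
        intro hmem
        exact hl ((hSsnd _ hmem).1)
      rw [hfun, lintegral_zero]
      symm
      exact Set.indicator_of_notMem (fun hmem => hl (Set.mem_Ici.1 hmem)) _
  have step3 : (∫⁻ l in Set.Ici ε, Ψ l) =
      (∫⁻ l in Set.Ico ε 1, Ψ l) + ∫⁻ l in Set.Ici 1, Ψ l := by
    rw [← Set.Ico_union_Ici_eq_Ici hε1]
    apply lintegral_union measurableSet_Ici
    rw [Set.disjoint_left]
    intro x hx hx'
    exact absurd hx.2 (not_lt.2 hx')
  have piece2 : (∫⁻ l in Set.Ici 1, Ψ l) = ENNReal.ofReal (1 - d) * ENNReal.ofReal c := by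
    rw [← setLIntegral_congr (Ioi_ae_eq_Ici)]
    have hcg : ∀ l ∈ Set.Ioi (1:ℝ), Ψ l =
        ENNReal.ofReal (1 - d) * ENNReal.ofReal (c / l ^ 2) := by
      intro l hl
      rw [hΨdef, hf₀def, hwdef]
      simp only [if_neg (not_lt.2 (le_of_lt (show (1:ℝ) < l from hl))), if_neg (not_le.2 (show (1:ℝ) < l from hl))]
      rw [show 2 * ((1:ℝ)/2) - d = 1 - d by ring, mul_comm]
    have hm : Measurable fun l : ℝ => ENNReal.ofReal (c / l ^ 2) := by fun_prop
    rw [setLIntegral_congr_fun measurableSet_Ioi hcg,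
      lintegral_const_mul _ hm, tail_piece hcge]
  set χ : ℝ → ℝ≥0∞ :=
    fun l => ENNReal.ofReal (-g2 l) * ENNReal.ofReal (l - d) with hχdef
  have piece1a : (∫⁻ l in Set.Ico ε 1, Ψ l) = ∫⁻ l in Set.Ioo ε 1, χ l := by
    rw [← setLIntegral_congr (Ioo_ae_eq_Ico)]
    apply setLIntegral_congr_fun measurableSet_Ioo
    intro l hl
    have hl0 : (0:ℝ) < l := lt_trans hε hl.1
    have hlne : l ≠ 0 := ne_of_gt hl0
    rw [hΨdef, hχdef, hf₀def, hwdef]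
    simp only [if_pos hl.2, if_pos hl.2.le]
    rw [show 2 * (l/2) - d = l - d by ring,
      show -(l ^ 2) * g2 l / l ^ 2 = -g2 l by field_simp]
  have hmerge : ∀ A : Set ℝ, MeasurableSet A → (∀ l ∈ A, d ≤ l) →
      (∫⁻ l in A, χ l) = ∫⁻ l in A, ENNReal.ofReal ((l - d) * (-g2 l)) := by
    intro A hAm hA
    apply setLIntegral_congr_fun hAm
    intro l hl
    simp only [hχdef]
    rw [ENNReal.ofReal_mul (sub_nonneg.2 (hA l hl))]
    ring
  have main : (∫⁻ p in S, ENNReal.ofReal (f p.2 / p.2 ^ 2)) =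
      (∫⁻ l in Set.Ioo ε 1, χ l) + ENNReal.ofReal (1 - d) * ENNReal.ofReal c := by
    rw [step1, step2, step3, piece1a, piece2]
  refine ⟨?_, ?_, ?_⟩
  · -- ε ≤ d ≤ 1
    intro hεd hd1'
    have hd0' : 0 < d := lt_of_lt_of_le hε hεd
    have hseteq : Set.Ioi d ∩ Set.Ioo ε 1 = Set.Ioo d 1 := by
      ext x
      simp only [Set.mem_inter_iff, Set.mem_Ioi, Set.mem_Ioo]
      constructor
      · rintro ⟨h1, _, h3⟩; exact ⟨h1, h3⟩
      · rintro ⟨h1, h2⟩; exact ⟨h1, lt_of_le_of_lt hεd h1, h2⟩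
    have hind : (∫⁻ l in Set.Ioo ε 1, χ l) = ∫⁻ l in Set.Ioo d 1, χ l := by
      have hχind : χ = fun l => (Set.Ioi d).indicator χ l := by
        funext l
        by_cases h : l ∈ Set.Ioi d
        · rw [Set.indicator_of_mem h]
        · rw [Set.indicator_of_notMem h]
          simp only [hχdef]
          have hld : l - d ≤ 0 := by
            simp only [Set.mem_Ioi, not_lt] at h; linarith
          rw [ENNReal.ofReal_of_nonpos hld, mul_zero]
      calc (∫⁻ l in Set.Ioo ε 1, χ l)
          = ∫⁻ l in Set.Ioo ε 1, (Set.Ioi d).indicator χ l := by rw [← hχind]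
        _ = ∫⁻ l in Set.Ioi d ∩ Set.Ioo ε 1, χ l := setLIntegral_indicator measurableSet_Ioi χ
        _ = ∫⁻ l in Set.Ioo d 1, χ l := by rw [hseteq]
    have hftc := ftc_piece hd1 hd2 hg2le hc hg1lim hg'1 hd0' le_rfl hd1'
    rw [main, hind, hmerge _ measurableSet_Ioo (fun l hl => hl.1.le), hftc.1,
      ← ENNReal.ofReal_mul (by linarith : (0:ℝ) ≤ 1 - d),
      ← ENNReal.ofReal_add (sub_nonneg.2 hftc.2) (mul_nonneg (by linarith) hcge)]
    congr 1
    have hgd : Real.log (r d) = g d := rfl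
    rw [hgd, hgone]
    ring
  · -- d < ε
    intro hdε
    have hftc := ftc_piece hd1 hd2 hg2le hc hg1lim hg'1 hε hdε.le hε1
    rw [main, hmerge _ measurableSet_Ioo (fun l hl => le_trans hdε.le hl.1.le), hftc.1,
      ← ENNReal.ofReal_mul (by linarith : (0:ℝ) ≤ 1 - d),
      ← ENNReal.ofReal_add (sub_nonneg.2 hftc.2)
        (mul_nonneg (by linarith [hdε, hε1] : (0:ℝ) ≤ 1 - d) hcge)]
    congr 1
    have hgε : Real.log (r ε) = g ε := rfl
    have hεne : ε ≠ 0 := ne_of_gt hε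
    rw [hgε, hgone]
    field_simp
    ring
  · -- 1 < d
    intro hd1'
    have h1 : (∫⁻ l in Set.Ioo ε 1, χ l) = 0 := by
      have hz : ∀ l ∈ Set.Ioo ε 1, χ l = 0 := by
        intro l hl
        simp only [hχdef]
        rw [ENNReal.ofReal_of_nonpos (by linarith [hl.2] : l - d ≤ 0), mul_zero]
      rw [setLIntegral_congr_fun measurableSet_Ioo hz,
        lintegral_zero]
    rw [main, h1, ENNReal.ofReal_of_nonpos (by linarith : (1:ℝ) - d ≤ 0), zero_mul, add_zero]
end

section
/- There exists a constant C > 0 such that for every integer k ≥ 2, the integral I_k = ∫_{0<s₁<⋯<s_k<1} (−log(s_k − s_1)) ds₁⋯ds_k satisfies 0 ≤ I_k ≤ C / k!. In other words, ∫_{0<s₁<⋯<s_k<1} (−log(s_k − s_1)) ds₁⋯ds_k = O(1/k!) as k → ∞. -/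
open MeasureTheory Real

section Aux

open Set ENNReal

private lemma key1d (a : ℝ) :
    ∫⁻ y, ENNReal.ofReal (-Real.log |y - a|) ∂((volume : Measure ℝ).restrict (Set.Ioo 0 1)) ≤ 2 := by
  set ν : Measure ℝ := (volume : Measure ℝ).restrict (Set.Ioo 0 1) with hν
  have hmeas : Measurable fun y : ℝ => max 0 (-Real.log |y - a|) :=
    measurable_const.max ((Real.measurable_log.comp ((measurable_id.sub_const a).abs)).neg)
  have hmax : ∀ y : ℝ, ENNReal.ofReal (-Real.log |y - a|)
      = ENNReal.ofReal (max 0 (-Real.log |y - a|)) := by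
    intro y
    rcases le_total 0 (-Real.log |y - a|) with h | h
    · rw [max_eq_right h]
    · rw [max_eq_left h, ENNReal.ofReal_eq_zero.mpr h, ENNReal.ofReal_zero]
  simp_rw [hmax]
  have hlc := lintegral_eq_lintegral_meas_lt ν (f := fun y : ℝ => max 0 (-Real.log |y - a|))
    (ae_of_all _ fun y => le_max_left _ _) hmeas.aemeasurable
  rw [hlc]
  have hb : ∀ t ∈ Set.Ioi (0:ℝ), ν {y : ℝ | t < max 0 (-Real.log |y - a|)}
      ≤ ENNReal.ofReal (2 * Real.exp (-t)) := by
    intro t ht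
    have hsub : {y : ℝ | t < max 0 (-Real.log |y - a|)}
        ⊆ Set.Ioo (a - Real.exp (-t)) (a + Real.exp (-t)) := by
      intro y hy
      simp only [Set.mem_setOf_eq] at hy
      have ht0 : (0:ℝ) < t := ht
      have hlt : t < -Real.log |y - a| := by
        rcases max_cases 0 (-Real.log |y - a|) with ⟨he, _⟩ | ⟨he, _⟩
        · rw [he] at hy; linarith
        · rwa [he] at hy
      have hy0 : y ≠ a := by
        rintro rfl
        simp at hlt; linarith
      have habs : 0 < |y - a| := abs_pos.mpr (sub_ne_zero.mpr hy0)
      have : |y - a| < Real.exp (-t) := (Real.log_lt_iff_lt_exp habs).mp (by linarith)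
      have := abs_lt.mp this
      constructor <;> [linarith [this.2]; linarith [this.1]]
    calc ν {y : ℝ | t < max 0 (-Real.log |y - a|)}
        ≤ volume {y : ℝ | t < max 0 (-Real.log |y - a|)} :=
          Measure.le_iff'.mp Measure.restrict_le_self _
      _ ≤ volume (Set.Ioo (a - Real.exp (-t)) (a + Real.exp (-t))) := measure_mono hsub
      _ = ENNReal.ofReal (2 * Real.exp (-t)) := by
          rw [Real.volume_Ioo]; congr 1; ring
  calc ∫⁻ t in Set.Ioi (0:ℝ), ν {y : ℝ | t < max 0 (-Real.log |y - a|)}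
      ≤ ∫⁻ t in Set.Ioi (0:ℝ), ENNReal.ofReal (2 * Real.exp (-t)) := by
        exact setLIntegral_mono (by fun_prop) hb
    _ = ENNReal.ofReal (∫ t in Set.Ioi (0:ℝ), 2 * Real.exp (-t)) := by
        rw [ofReal_integral_eq_lintegral_ofReal]
        · have : IntegrableOn (fun t : ℝ => Real.exp (-t)) (Set.Ioi 0) := by
            simpa using exp_neg_integrableOn_Ioi 0 (zero_lt_one)
          exact this.const_mul 2
        · exact ae_of_all _ fun t => by positivity
    _ = 2 := by
        rw [MeasureTheory.integral_const_mul, integral_exp_neg_Ioi_zero]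
        norm_num

private lemma restrict_cube (k : ℕ) :
    (volume : Measure (Fin k → ℝ)).restrict (Set.pi Set.univ fun _ => Set.Ioo (0:ℝ) 1)
      = Measure.pi (fun _ : Fin k => (volume : Measure ℝ).restrict (Set.Ioo 0 1)) := by
  refine Measure.pi_eq (μ := fun _ : Fin k => (volume : Measure ℝ).restrict (Set.Ioo 0 1))
    (μ' := (volume : Measure (Fin k → ℝ)).restrict (Set.pi Set.univ fun _ => Set.Ioo (0:ℝ) 1))
    (fun t ht => ?_) |>.symm
  rw [Measure.restrict_apply (MeasurableSet.univ_pi ht), ← Set.pi_inter_distrib,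
    volume_pi, Measure.pi_pi]
  simp_rw [Measure.restrict_apply (ht _)]

private lemma cube_bound {k : ℕ} (i0 i1 : Fin k) (hne : i0 ≠ i1) :
    ∫⁻ s in (Set.pi Set.univ fun _ => Set.Ioo (0:ℝ) 1),
      ENNReal.ofReal (-Real.log |s i1 - s i0|) ∂(volume : Measure (Fin k → ℝ)) ≤ 2 := by
  set ν : Measure ℝ := (volume : Measure ℝ).restrict (Set.Ioo 0 1) with hν
  haveI : IsProbabilityMeasure ν := ⟨by
    rw [hν, Measure.restrict_apply_univ, Real.volume_Ioo]; norm_num⟩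
  rw [restrict_cube k]
  set G : (Fin k → ℝ) → ℝ≥0∞ := fun s => ENNReal.ofReal (-Real.log |s i1 - s i0|) with hG
  have hGm : Measurable G := by
    apply ENNReal.measurable_ofReal.comp
    exact (Real.measurable_log.comp (((measurable_pi_apply i1).sub
      (measurable_pi_apply i0)).abs)).neg
  have hgm : Measurable (fun _ : Fin k → ℝ => (2 : ℝ≥0∞)) := measurable_const
  have hle : ∫⋯∫⁻_{i0, i1}, G ∂(fun _ => ν) ≤ ∫⋯∫⁻_{i0, i1}, (fun _ => (2:ℝ≥0∞)) ∂(fun _ => ν) := by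
    intro x
    have h01 : i0 ∉ ({i1} : Finset (Fin k)) := by simpa using hne
    rw [show ({i0, i1} : Finset (Fin k)) = insert i0 {i1} by rfl]
    rw [lmarginal_insert _ hGm h01, lmarginal_insert _ hgm h01]
    simp_rw [lmarginal_singleton]
    calc ∫⁻ y0, ∫⁻ y1, G (Function.update (Function.update x i0 y0) i1 y1) ∂ν ∂ν
        ≤ ∫⁻ _, 2 ∂ν := by
          apply lintegral_mono
          intro y0
          have : ∀ y1 : ℝ, G (Function.update (Function.update x i0 y0) i1 y1)
              = ENNReal.ofReal (-Real.log |y1 - y0|) := by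
            intro y1
            rw [hG]
            simp only [Function.update_self, Function.update_of_ne hne, Function.update_self]
          simp_rw [this]
          exact key1d y0
      _ = ∫⁻ y0, ∫⁻ _, (2:ℝ≥0∞) ∂ν ∂ν := by simp [lintegral_const]
  have := lintegral_le_of_lmarginal_le (μ := fun _ : Fin k => ν) {i0, i1} hGm hgm hle
  calc ∫⁻ s, G s ∂(Measure.pi fun _ => ν) ≤ ∫⁻ _, 2 ∂(Measure.pi fun _ => ν) := this
    _ = 2 := by simp

end Aux

open Set ENNReal in
/-- The simplex integrals `I_k = ∫_{0<s₁<⋯<s_k<1} (−log(s_k − s₁)) ds` are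
nonnegative and satisfy `I_k = O(1/k!)`: there is a constant `C > 0` with
`0 ≤ I_k ≤ C / k!` for all `k ≥ 2`. -/
theorem log_simplex_integral_bound :
    ∃ C : ℝ, 0 < C ∧ ∀ (k : ℕ) (hk : 2 ≤ k),
      0 ≤ (∫ s in orderedSimplex k, -Real.log (s ⟨k - 1, by omega⟩ - s ⟨0, by omega⟩)) ∧
      (∫ s in orderedSimplex k, -Real.log (s ⟨k - 1, by omega⟩ - s ⟨0, by omega⟩)) ≤
        C / (k.factorial : ℝ) := by
  refine ⟨2, two_pos, fun k hk => ?_⟩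
  have hk0 : 0 < k := by omega
  set i0 : Fin k := ⟨0, by omega⟩ with hi0
  set i1 : Fin k := ⟨1, by omega⟩ with hi1
  set iK : Fin k := ⟨k - 1, by omega⟩ with hiK
  have hi01 : i0 ≠ i1 := by simp [hi0, hi1, Fin.ext_iff]
  have hi0K : i0 < iK := by simp [hi0, hiK, Fin.lt_def]; omega
  set A : Set (Fin k → ℝ) := orderedSimplex k with hA'
  -- measurability of the simplex
  have hA : MeasurableSet A := by
    have : A =
        (⋂ (i : Fin k) (j : Fin k) (_ : i < j), {s : Fin k → ℝ | s i < s j}) ∩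
        (⋂ i : Fin k, (fun s : Fin k → ℝ => s i) ⁻¹' (Set.Ioo (0:ℝ) 1)) := by
      ext s
      simp only [hA', orderedSimplex, Set.mem_setOf_eq, Set.mem_inter_iff, Set.mem_iInter,
        Set.mem_preimage]
      exact ⟨fun h => ⟨fun i j hij => h.1 hij, h.2⟩, fun h => ⟨fun i j hij => h.1 i j hij, h.2⟩⟩
    rw [this]
    refine MeasurableSet.inter ?_ ?_
    · exact MeasurableSet.iInter fun i => .iInter fun j => .iInter fun _ =>
        measurableSet_lt (measurable_pi_apply i) (measurable_pi_apply j)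
    · exact MeasurableSet.iInter fun i => (measurable_pi_apply i) measurableSet_Ioo
  -- the integrand
  set f : (Fin k → ℝ) → ℝ := fun s => -Real.log (s iK - s i0) with hf'
  have hfm : Measurable f := by
    exact (Real.measurable_log.comp ((measurable_pi_apply iK).sub (measurable_pi_apply i0))).neg
  have hfnn : ∀ s ∈ A, 0 ≤ f s := by
    intro s hs
    obtain ⟨hmono, hIoo⟩ := hs
    have h1 : 0 < s iK - s i0 := sub_pos.mpr (hmono hi0K)
    have h2 : s iK - s i0 ≤ 1 := by
      have := (hIoo iK).2; have := (hIoo i0).1; linarith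
    simpa [hf'] using neg_nonneg.mpr (Real.log_nonpos h1.le h2)
  have hnonneg : 0 ≤ ∫ s in A, f s := setIntegral_nonneg hA hfnn
  refine ⟨hnonneg, ?_⟩
  -- pass to the lower integral
  set L : ℝ≥0∞ := ∫⁻ s in A, ENNReal.ofReal (f s) with hL'
  have hIL : (∫ s in A, f s) = L.toReal := by
    rw [hL', integral_eq_lintegral_of_nonneg_ae]
    · filter_upwards [ae_restrict_mem hA] with s hs using hfnn s hs
    · exact hfm.aestronglyMeasurable.restrict
  -- the symmetrization
  set G : (Fin k → ℝ) → ℝ≥0∞ := fun s => ENNReal.ofReal (-Real.log |s i1 - s i0|) with hG'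
  have hGm : Measurable G :=
    ENNReal.measurable_ofReal.comp
      ((Real.measurable_log.comp (((measurable_pi_apply i1).sub
        (measurable_pi_apply i0)).abs)).neg)
  set e : Equiv.Perm (Fin k) → ((Fin k → ℝ) ≃ᵐ (Fin k → ℝ)) :=
    fun σ => MeasurableEquiv.piCongrLeft (fun _ : Fin k => ℝ) σ with he'
  have happly : ∀ (σ : Equiv.Perm (Fin k)) (s : Fin k → ℝ) (j : Fin k),
      e σ s j = s (σ.symm j) := by
    intro σ s j
    conv_lhs => rw [← σ.apply_symm_apply j]
    rw [he', MeasurableEquiv.piCongrLeft_apply_apply]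
  set B : Equiv.Perm (Fin k) → Set (Fin k → ℝ) := fun σ => (e σ) ⁻¹' A with hB'
  have hBm : ∀ σ, MeasurableSet (B σ) := fun σ => (e σ).measurable hA
  have hLσ : ∀ σ, ∫⁻ s in B σ, ENNReal.ofReal (f (e σ s)) = L := by
    intro σ
    exact (volume_measurePreserving_piCongrLeft (fun _ : Fin k => ℝ) σ).setLIntegral_comp_preimage_emb
      (e σ).measurableEmbedding (fun s => ENNReal.ofReal (f s)) A
  have hptwise : ∀ σ, ∀ s ∈ B σ, ENNReal.ofReal (f (e σ s)) ≤ G s := by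
    intro σ s hs
    obtain ⟨hmono, hIoo⟩ : StrictMono (e σ s) ∧ ∀ j, (e σ s) j ∈ Set.Ioo (0:ℝ) 1 := hs
    set t : Fin k → ℝ := e σ s with ht'
    have hst : ∀ i : Fin k, s i = t (σ i) := by
      intro i; rw [ht', happly, σ.symm_apply_apply]
    have hbnd : ∀ j : Fin k, t i0 ≤ t j ∧ t j ≤ t iK := by
      intro j
      constructor
      · exact hmono.monotone (by simp [hi0, Fin.le_def])
      · exact hmono.monotone (by simp [hiK, Fin.le_def]; omega)
    have hne : s i1 ≠ s i0 := by
      rw [hst i1, hst i0]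
      exact fun h => hi01 ((σ.injective (hmono.injective h)).symm)
    have habs : 0 < |s i1 - s i0| := abs_pos.mpr (sub_ne_zero.mpr hne)
    have hle : |s i1 - s i0| ≤ t iK - t i0 := by
      rw [abs_le]
      have h1 := hbnd (σ i1); have h2 := hbnd (σ i0)
      rw [hst i1, hst i0]
      constructor <;> [linarith [h1.1, h2.2]; linarith [h1.2, h2.1]]
    have : f (e σ s) ≤ -Real.log |s i1 - s i0| :=
      neg_le_neg (Real.log_le_log habs hle)
    exact ENNReal.ofReal_le_ofReal this
  have hdisj : Set.PairwiseDisjoint (↑(Finset.univ : Finset (Equiv.Perm (Fin k)))) B := by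
    intro σ _ τ _ hst
    refine Set.disjoint_left.mpr fun s hsσ hsτ => hst ?_
    obtain ⟨hmσ, _⟩ : StrictMono (e σ s) ∧ _ := hsσ
    obtain ⟨hmτ, _⟩ : StrictMono (e τ s) ∧ _ := hsτ
    have hfun : ∀ ρ : Equiv.Perm (Fin k), e ρ s = s ∘ ρ.symm := by
      intro ρ; funext j; rw [happly]; rfl
    have hrange : Set.range (e σ s) = Set.range (e τ s) := by
      rw [hfun, hfun, Set.range_comp, Set.range_comp]
      simp [Equiv.range_eq_univ]
    haveI : WellFoundedLT (Fin k) := inferInstance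
    have heq : e σ s = e τ s := (hmσ.range_inj hmτ).mp hrange
    have hsinj : Function.Injective s := by
      intro a b hab
      have : (e σ s) (σ a) = (e σ s) (σ b) := by
        rw [happly, happly, σ.symm_apply_apply, σ.symm_apply_apply]; exact hab
      exact σ.injective (hmσ.injective this)
    apply Equiv.ext
    intro i
    have := congrFun heq (σ i)
    rw [happly, happly, σ.symm_apply_apply] at this
    have h2 : i = τ.symm (σ i) := hsinj this
    exact ((congrArg τ h2).trans (τ.apply_symm_apply (σ i))).symm
  -- summing over permutations
  have hcube : (⋃ σ ∈ (Finset.univ : Finset (Equiv.Perm (Fin k))), B σ)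
      ⊆ Set.pi Set.univ fun _ => Set.Ioo (0:ℝ) 1 := by
    intro s hs
    simp only [Set.mem_iUnion] at hs
    obtain ⟨σ, _, hsσ⟩ := hs
    obtain ⟨_, hIoo⟩ : StrictMono (e σ s) ∧ ∀ j, (e σ s) j ∈ Set.Ioo (0:ℝ) 1 := hsσ
    intro i _
    have := hIoo (σ i)
    rwa [happly, σ.symm_apply_apply] at this
  have hmain : (k.factorial : ℝ≥0∞) * L ≤ 2 := by
    calc (k.factorial : ℝ≥0∞) * L
        = ∑ σ : Equiv.Perm (Fin k), L := by
          rw [Finset.sum_const, Finset.card_univ, Fintype.card_perm, Fintype.card_fin,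
            nsmul_eq_mul]
      _ ≤ ∑ σ : Equiv.Perm (Fin k), ∫⁻ s in B σ, G s := by
          refine Finset.sum_le_sum fun σ _ => ?_
          rw [← hLσ σ]
          exact setLIntegral_mono hGm (hptwise σ)
      _ = ∫⁻ s in ⋃ σ ∈ (Finset.univ : Finset (Equiv.Perm (Fin k))), B σ, G s := by
          rw [lintegral_biUnion_finset hdisj (fun σ _ => hBm σ)]
      _ ≤ ∫⁻ s in Set.pi Set.univ fun _ => Set.Ioo (0:ℝ) 1, G s :=
          lintegral_mono_set hcube
      _ ≤ 2 := cube_bound i0 i1 hi01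
  have hfac0 : (k.factorial : ℝ≥0∞) ≠ 0 := by
    simp [Nat.factorial_ne_zero]
  have hLle : L ≤ 2 / (k.factorial : ℝ≥0∞) := by
    rw [ENNReal.le_div_iff_mul_le (Or.inl hfac0) (Or.inl (ENNReal.natCast_ne_top _))]
    rwa [mul_comm]
  rw [hIL]
  calc L.toReal ≤ ((2 : ℝ≥0∞) / (k.factorial : ℝ≥0∞)).toReal := by
        refine ENNReal.toReal_mono ?_ hLle
        exact (ENNReal.div_lt_top (by norm_num) hfac0).ne
    _ = 2 / (k.factorial : ℝ) := by
        rw [ENNReal.toReal_div, ENNReal.toReal_ofNat, ENNReal.toReal_natCast]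
end
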